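/- arXiv:2512.13068 — 7 statements merged into one kernel-verified Lean document; each statement's English description precedes it below -/
import Mathlib

section
/- Let (Υ_j)_{j≥1} be a nonnegative real sequence with Σ_{j=1}^∞ Υ_j < ∞. Then for every real m > 0, the sum Σ_{v ⊆ ℕ finite} |v|! · m^{|v|} · ∏_{j∈v} Υ_j is finite. -/
/-!
Since `m ^ #v * ∏ j ∈ v, Υ j = ∏ j ∈ v, m * Υ j`, it suffices to show that the weights
`#v ! * ∏ i ∈ v, x i` are summable for a summable nonnegative `x`. The inequality
`k ! * e_k(x) ≤ (∑ x) ^ k` for elementary symmetric sums bounds their sum over the subsets of a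
finite set with `∑ x < 1` by the geometric series `(1 - ∑ x)⁻¹`. In general, choose a finite
`s₀` off which `∑ 2 * x < 1 / 2`. As `(a + b)! ≤ 2 ^ (a + b) * a ! * b !`, the weight of `v`
is at most the product of the weights for `2 * x` of `v ∩ s₀` and `v \ s₀`, so every partial
sum is bounded by a finite sum over the subsets of `s₀` times `2`.
-/

open Finset Nat

theorem Multiset.esymm_cons_succ {R : Type*} [CommSemiring R] (a : R) (s : Multiset R) (k : ℕ) :
    (a ::ₘ s).esymm (k + 1) = s.esymm (k + 1) + a * s.esymm k := by
  simp [Multiset.esymm, Multiset.powersetCard_cons, Multiset.map_map,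
    Multiset.sum_map_mul_left]

theorem Multiset.factorial_mul_esymm_le_sum_pow {R : Type*} [CommSemiring R] [LinearOrder R]
    [IsOrderedRing R] [ExistsAddOfLE R] {s : Multiset R} (hs : ∀ x ∈ s, 0 ≤ x) (k : ℕ) :
    (k ! : R) * s.esymm k ≤ s.sum ^ k := by
  induction s using Multiset.induction_on generalizing k with
  | empty =>
    cases k <;> simp [Multiset.esymm, Multiset.powersetCard_zero_right]
  | cons a s ih =>
    have ha : 0 ≤ a := hs a (Multiset.mem_cons_self a s)
    have hs' : ∀ x ∈ s, 0 ≤ x := fun x hx => hs x (Multiset.mem_cons_of_mem hx)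
    have hS : 0 ≤ s.sum := Multiset.sum_nonneg hs'
    cases k with
    | zero => simp [Multiset.esymm, Multiset.powersetCard_zero_left]
    | succ k =>
      calc ((k + 1)! : R) * (a ::ₘ s).esymm (k + 1)
          = (k + 1)! * s.esymm (k + 1) + (k + 1) * (k ! * s.esymm k) * a := by
            rw [Multiset.esymm_cons_succ, Nat.factorial_succ]; push_cast; ring
        _ ≤ s.sum ^ (k + 1) + (k + 1) * s.sum ^ k * a := by
            have hk : (0 : R) ≤ k + 1 := add_nonneg k.cast_nonneg zero_le_one
            gcongr ?_ + _ * ?_ * _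
            exacts [ih hs' (k + 1), ih hs' k]
        _ ≤ (a ::ₘ s).sum ^ (k + 1) := by
            rw [Multiset.sum_cons, add_comm a]
            simpa using
              pow_add_mul_le_add_pow hS (add_nonneg (mul_nonneg zero_le_two hS) ha) (k + 1)

theorem Finset.factorial_mul_sum_powersetCard_prod_le {ι R : Type*} [CommSemiring R]
    [LinearOrder R] [IsOrderedRing R] [ExistsAddOfLE R] {s : Finset ι} {x : ι → R}
    (hx : ∀ i ∈ s, 0 ≤ x i) (k : ℕ) :
    (k ! : R) * ∑ t ∈ s.powersetCard k, ∏ i ∈ t, x i ≤ (∑ i ∈ s, x i) ^ k := by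
  rw [← Finset.esymm_map_val]
  exact Multiset.factorial_mul_esymm_le_sum_pow (by simpa using hx) k

theorem Nat.factorial_add_le (a b : ℕ) : (a + b)! ≤ 2 ^ (a + b) * a ! * b ! := by
  rw [← Nat.add_choose_mul_factorial_mul_factorial, mul_assoc, mul_assoc]
  exact Nat.mul_le_mul_right _ (Nat.choose_le_two_pow _ _)

theorem Finset.sum_powerset_union_of_disjoint {α M : Type*} [DecidableEq α] [AddCommMonoid M]
    {s t : Finset α} (hst : Disjoint s t) (f : Finset α → M) :
    ∑ v ∈ (s ∪ t).powerset, f v =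
      ∑ a ∈ s.powerset, ∑ b ∈ t.powerset, f (a ∪ b) := by
  rw [← sum_product']
  symm
  refine sum_nbij' (fun p => p.1 ∪ p.2) (fun v => (v ∩ s, v ∩ t)) ?_ ?_ ?_ ?_ (fun _ _ => rfl)
  · intro p hp
    simp only [mem_product, mem_powerset] at hp ⊢
    exact union_subset_union hp.1 hp.2
  · intro v _
    simp only [mem_product, mem_powerset]
    exact ⟨inter_subset_right, inter_subset_right⟩
  · rintro ⟨a, b⟩ hp
    simp only [mem_product, mem_powerset] at hp
    rw [disjoint_left] at hst
    ext i <;> simp only [mem_inter, mem_union] <;> grind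
  · intro v hv
    simp only [mem_powerset] at hv
    rw [← inter_union_distrib_left, inter_eq_left.2 hv]

theorem summable_of_sum_powerset_le {α : Type*} {f : Finset α → ℝ} {c : ℝ} (hf : 0 ≤ f)
    (h : ∀ s : Finset α, ∑ v ∈ s.powerset, f v ≤ c) : Summable f := by
  classical
  refine summable_of_sum_le hf fun u => le_trans ?_ (h (u.sup id))
  refine sum_le_sum_of_subset_of_nonneg (fun v hv => ?_) fun v _ _ => hf v
  exact mem_powerset.2 (le_sup (f := id) hv)

-- The product and order dependent (POD) weights with product factors `x`.
noncomputable def podWeight {α : Type*} (x : α → ℝ) (v : Finset α) : ℝ :=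
  (v.card ! : ℝ) * ∏ i ∈ v, x i

section podWeight

variable {α : Type*} {x : α → ℝ}

theorem podWeight_nonneg (hx : ∀ i, 0 ≤ x i) : 0 ≤ podWeight x :=
  fun _ => mul_nonneg (Nat.cast_nonneg _) (prod_nonneg fun i _ => hx i)

theorem podWeight_union_le [DecidableEq α] {s t : Finset α} (hst : Disjoint s t)
    (hx : ∀ i ∈ s ∪ t, 0 ≤ x i) :
    podWeight x (s ∪ t) ≤ podWeight (fun i => 2 * x i) s * podWeight (fun i => 2 * x i) t := by
  have hfact : ((#s + #t)! : ℝ) ≤ 2 ^ (#s + #t) * (#s)! * (#t)! := by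
    exact_mod_cast Nat.factorial_add_le #s #t
  have hprod : 0 ≤ (∏ i ∈ s, x i) * ∏ i ∈ t, x i :=
    mul_nonneg (prod_nonneg fun i hi => hx i (mem_union_left t hi))
      (prod_nonneg fun i hi => hx i (mem_union_right s hi))
  calc podWeight x (s ∪ t) = ((#s + #t)! : ℝ) * ((∏ i ∈ s, x i) * ∏ i ∈ t, x i) := by
        rw [podWeight, card_union_of_disjoint hst, prod_union hst]
    _ ≤ 2 ^ (#s + #t) * (#s)! * (#t)! * ((∏ i ∈ s, x i) * ∏ i ∈ t, x i) := by gcongr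
    _ = _ := by simp only [podWeight, prod_mul_distrib, prod_const]; ring

theorem sum_powerset_podWeight_le {s : Finset α} (hx : ∀ i ∈ s, 0 ≤ x i)
    (hs : ∑ i ∈ s, x i < 1) :
    ∑ v ∈ s.powerset, podWeight x v ≤ (1 - ∑ i ∈ s, x i)⁻¹ := by
  calc ∑ v ∈ s.powerset, podWeight x v
      = ∑ k ∈ range (#s + 1), (k ! : ℝ) * ∑ v ∈ s.powersetCard k, ∏ i ∈ v, x i := by
        rw [sum_powerset]
        refine sum_congr rfl fun k _ => ?_
        rw [mul_sum]
        exact sum_congr rfl fun v hv => by rw [podWeight, (mem_powersetCard.1 hv).2]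
    _ ≤ ∑ k ∈ range (#s + 1), (∑ i ∈ s, x i) ^ k :=
        sum_le_sum fun k _ => factorial_mul_sum_powersetCard_prod_le hx k
    _ ≤ (1 - ∑ i ∈ s, x i)⁻¹ := by
        have := geom_sum_Ico_le_of_lt_one (m := 0) (n := #s + 1) (sum_nonneg hx) hs
        rwa [← range_eq_Ico, pow_zero, one_div] at this

theorem sum_powerset_union_podWeight_le [DecidableEq α] (hx : ∀ i, 0 ≤ x i) {s t : Finset α}
    (hst : Disjoint s t) :
    ∑ v ∈ (s ∪ t).powerset, podWeight x v ≤
      (∑ a ∈ s.powerset, podWeight (fun i => 2 * x i) a) *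
        ∑ b ∈ t.powerset, podWeight (fun i => 2 * x i) b := by
  rw [sum_powerset_union_of_disjoint hst, sum_mul_sum]
  refine sum_le_sum fun a ha => sum_le_sum fun b hb => podWeight_union_le ?_ fun i _ => hx i
  exact disjoint_of_subset_left (mem_powerset.1 ha)
    (disjoint_of_subset_right (mem_powerset.1 hb) hst)

theorem summable_podWeight (hx : ∀ i, 0 ≤ x i) (hsum : Summable x) :
    Summable (podWeight x) := by
  classical
  set y : α → ℝ := fun i => 2 * x i
  have hy : ∀ i, 0 ≤ y i := fun i => mul_nonneg zero_le_two (hx i)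
  obtain ⟨s₀, hs₀⟩ :=
    (hsum.mul_left 2).vanishing (Iio_mem_nhds (by norm_num : (0 : ℝ) < 1 / 2))
  have htail (t : Finset α) (ht : Disjoint t s₀) :
      ∑ b ∈ t.powerset, podWeight y b ≤ 2 := by
    have hsmall : ∑ i ∈ t, y i < 1 / 2 := hs₀ t ht
    refine (sum_powerset_podWeight_le (fun i _ => hy i) (by linarith)).trans ?_
    rw [inv_le_comm₀ (by linarith) two_pos]
    linarith
  refine summable_of_sum_powerset_le (podWeight_nonneg hx)
    (c := (∑ a ∈ s₀.powerset, podWeight y a) * 2) fun s => ?_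
  calc ∑ v ∈ s.powerset, podWeight x v
      ≤ ∑ v ∈ (s₀ ∪ s \ s₀).powerset, podWeight x v := by
        refine sum_le_sum_of_subset_of_nonneg (powerset_mono.2 ?_) fun v _ _ =>
          podWeight_nonneg hx v
        rw [union_sdiff_self_eq_union]
        exact subset_union_right
    _ ≤ (∑ a ∈ s₀.powerset, podWeight y a) * ∑ b ∈ (s \ s₀).powerset, podWeight y b :=
        sum_powerset_union_podWeight_le hx disjoint_sdiff
    _ ≤ (∑ a ∈ s₀.powerset, podWeight y a) * 2 :=
        mul_le_mul_of_nonneg_left (htail _ sdiff_disjoint)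
          (sum_nonneg fun a _ => podWeight_nonneg hy a)

end podWeight

theorem pod_factorial_summable (Υ : ℕ+ → ℝ) (hΥ : ∀ j, 0 ≤ Υ j) (hsum : Summable Υ)
    (m : ℝ) (hm : 0 < m) :
    Summable (fun v : Finset ℕ+ => (Nat.factorial v.card : ℝ) * m ^ v.card * ∏ j ∈ v, Υ j) := by
  refine (summable_podWeight (fun j => mul_nonneg hm.le (hΥ j)) (hsum.mul_left m)).congr
    fun v => ?_
  simp only [podWeight, prod_mul_distrib, prod_const, mul_assoc]
end

section
/- Let (Υ_j)_{j≥1} be a nonnegative summable sequence. Then the ℓ-th root of ∏_{J=1}^{ℓ} max(J·Υ_J, Σ_{j=J+1}^∞ Υ_j) tends to 0 as ℓ → ∞. In particular this ℓ-th root is bounded above by (1/ℓ)Σ_{J=1}^ℓ J·Υ_J + (1/ℓ)Σ_{J=1}^ℓ Σ_{j=J+1}^∞ Υ_j, and both averages converge to 0. -/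
/-!
By AM-GM the geometric mean of the factors `max (J Υ_J) (T_J)`, where `T_J = ∑_{j > J} Υ_j`,
is at most the sum of the Cesàro means of `J Υ_J` and of `T_J`. The tails `T_J` tend to `0`,
hence so do their Cesàro means. Exchanging the order of summation,
`∑_{J ≤ ℓ} J Υ_J = ∑_{k ≤ ℓ} ∑_{k ≤ J ≤ ℓ} Υ_J ≤ ∑_{k ≤ ℓ} (Υ_k + T_k)`,
so the Cesàro means of `J Υ_J` are dominated by those of the null sequence
`Υ_k + T_k`.
-/

open Filter Finset Topology

theorem Real.geom_mean_le_arith_mean_unweighted {ι : Type*} {s : Finset ι} (hs : s.Nonempty)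
    {z : ι → ℝ} (hz : ∀ i ∈ s, 0 ≤ z i) :
    (∏ i ∈ s, z i) ^ (1 / (#s : ℝ)) ≤ 1 / #s * ∑ i ∈ s, z i := by
  have h := Real.geom_mean_le_arith_mean s (fun _ => 1) z (fun _ _ => zero_le_one)
    (by simpa using hs) hz
  simp only [Real.rpow_one, one_mul, sum_const, nsmul_eq_mul, mul_one] at h
  rwa [one_div, inv_mul_eq_div]

theorem Real.geom_mean_max_le_arith_mean_add {ι : Type*} {s : Finset ι} (hs : s.Nonempty)
    {a b : ι → ℝ} (ha : ∀ i ∈ s, 0 ≤ a i) (hb : ∀ i ∈ s, 0 ≤ b i) :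
    (∏ i ∈ s, max (a i) (b i)) ^ (1 / (#s : ℝ))
      ≤ 1 / #s * ∑ i ∈ s, a i + 1 / #s * ∑ i ∈ s, b i := by
  calc (∏ i ∈ s, max (a i) (b i)) ^ (1 / (#s : ℝ))
      ≤ 1 / #s * ∑ i ∈ s, max (a i) (b i) :=
        geom_mean_le_arith_mean_unweighted hs fun i hi => (ha i hi).trans (le_max_left _ _)
    _ ≤ 1 / #s * ∑ i ∈ s, (a i + b i) := by
        gcongr with i hi
        exact max_le (le_add_of_nonneg_right (hb i hi)) (le_add_of_nonneg_left (ha i hi))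
    _ = 1 / #s * ∑ i ∈ s, a i + 1 / #s * ∑ i ∈ s, b i := by
        rw [sum_add_distrib, mul_add]

namespace PNat

theorem card_Icc_one (ℓ : ℕ+) : #(Icc 1 ℓ) = ℓ := by
  simp [PNat.card_Icc]

theorem sum_Icc_one_eq_sum_range {M : Type*} [AddCommMonoid M] (u : ℕ+ → M) (ℓ : ℕ+) :
    ∑ J ∈ Icc 1 ℓ, u J = ∑ i ∈ range ℓ, u i.succPNat := by
  refine sum_nbij' PNat.natPred Nat.succPNat (fun J hJ => ?_) (fun i hi => ?_)
    (fun J _ => J.succPNat_natPred) (fun i _ => i.natPred_succPNat) (fun J _ => ?_)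
  · exact mem_range.2 ((Nat.sub_lt J.pos one_pos).trans_le (mem_Icc.1 hJ).2)
  · exact mem_Icc.2 ⟨one_le, mem_range.1 hi⟩
  · rw [J.succPNat_natPred]

theorem sum_Icc_one_mul_eq_sum_sum_Icc {R : Type*} [Semiring R] (f : ℕ+ → R) (ℓ : ℕ+) :
    ∑ J ∈ Icc 1 ℓ, (J : R) * f J = ∑ k ∈ Icc 1 ℓ, ∑ J ∈ Icc k ℓ, f J := by
  have hJ : ∀ J : ℕ+, (J : R) * f J = ∑ _k ∈ Icc 1 J, f J := fun J => by
    simp [PNat.card_Icc]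
  simp_rw [hJ]
  exact sum_comm' fun J k => by
    simp only [mem_Icc]
    exact ⟨fun ⟨⟨_, hJℓ⟩, hk1, hkJ⟩ => ⟨⟨hkJ, hJℓ⟩, hk1, hkJ.trans hJℓ⟩,
      fun ⟨⟨hkJ, hJℓ⟩, hk1, _⟩ => ⟨⟨hk1.trans hkJ, hJℓ⟩, hk1, hkJ⟩⟩

end PNat

theorem Filter.Tendsto.cesaro_pnat {u : ℕ+ → ℝ} {l : ℝ} (h : Tendsto u atTop (𝓝 l)) :
    Tendsto (fun ℓ : ℕ+ => 1 / (ℓ : ℝ) * ∑ J ∈ Icc 1 ℓ, u J) atTop (𝓝 l) := by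
  have hsucc : Tendsto Nat.succPNat atTop atTop :=
    tendsto_atTop_atTop_of_monotone (fun _ _ => Nat.succ_le_succ) fun J => ⟨J, Nat.le_succ _⟩
  simp_rw [PNat.sum_Icc_one_eq_sum_range, one_div]
  exact (h.comp hsucc).cesaro.comp tendsto_PNat_val_atTop_atTop

noncomputable def tailSum {α : Type*} [LinearOrder α] (f : α → ℝ) (a : α) : ℝ :=
  ∑' j, if a < j then f j else 0

section tailSum

variable {α : Type*} [LinearOrder α] {f : α → ℝ}

theorem tailSum_nonneg (hf0 : ∀ j, 0 ≤ f j) (a : α) : 0 ≤ tailSum f a :=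
  tsum_nonneg fun j => by split_ifs <;> simp [hf0 j]

theorem Summable.ite_lt (hf : Summable f) (a : α) :
    Summable fun j => if a < j then f j else 0 :=
  (hf.indicator (Set.Ioi a)).congr fun j => by by_cases h : a < j <;> simp [h]

theorem sum_le_tailSum (hf0 : ∀ j, 0 ≤ f j) (hf : Summable f) {a : α} {s : Finset α}
    (hs : ∀ j ∈ s, a < j) : ∑ j ∈ s, f j ≤ tailSum f a := by
  rw [← sum_congr rfl fun j hj => if_pos (hs j hj)]
  exact (hf.ite_lt a).sum_le_tsum s fun j _ => by split_ifs <;> simp [hf0 j]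

theorem sum_Icc_le_add_tailSum [LocallyFiniteOrder α] (hf0 : ∀ j, 0 ≤ f j) (hf : Summable f)
    {k ℓ : α} (hkℓ : k ≤ ℓ) : ∑ J ∈ Icc k ℓ, f J ≤ f k + tailSum f k := by
  rw [Icc_eq_cons_Ioc hkℓ, sum_cons]
  exact add_le_add_right (sum_le_tailSum hf0 hf fun j hj => (mem_Ioc.1 hj).1) _

variable [LocallyFiniteOrderBot α]

theorem tailSum_eq_tsum_sub_sum_Iic (hf : Summable f) (a : α) :
    tailSum f a = ∑' j, f j - ∑ j ∈ Iic a, f j := by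
  have hhead : ∑' j, (if j ≤ a then f j else 0) = ∑ j ∈ Iic a, f j := by
    rw [tsum_eq_sum (s := Iic a) fun j hj => if_neg (by simpa using hj)]
    exact sum_congr rfl fun j hj => if_pos (mem_Iic.1 hj)
  rw [← hhead, ← hf.tsum_sub (summable_of_hasFiniteSupport ?_)]
  · refine tsum_congr fun j => ?_
    rcases lt_or_ge a j with h | h
    · simp [h, not_le.2 h]
    · simp [h, not_lt.2 h]
  · exact (Set.finite_Iic a).subset fun j hj => by by_contra h; simp_all

theorem tendsto_tailSum_atTop (hf : Summable f) : Tendsto (tailSum f) atTop (𝓝 0) := by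
  have := (tendsto_const_nhds (x := ∑' j, f j)).sub
    (hf.hasSum.comp tendsto_finset_Iic_atTop_atTop)
  rw [sub_self] at this
  rw [funext (tailSum_eq_tsum_sub_sum_Iic hf)]
  exact this

end tailSum

theorem PNat.sum_Icc_one_mul_le_sum_add_tailSum {f : ℕ+ → ℝ} (hf0 : ∀ j, 0 ≤ f j)
    (hf : Summable f) (ℓ : ℕ+) :
    ∑ J ∈ Icc 1 ℓ, (J : ℝ) * f J ≤ ∑ k ∈ Icc 1 ℓ, (f k + tailSum f k) :=
  (sum_Icc_one_mul_eq_sum_sum_Icc f ℓ).trans_le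
    (sum_le_sum fun _ hk => sum_Icc_le_add_tailSum hf0 hf (mem_Icc.1 hk).2)

theorem geom_mean_max_tendsto_zero (Υ : ℕ+ → ℝ) (hΥ : ∀ j, 0 ≤ Υ j) (hsum : Summable Υ) :
    Tendsto (fun ℓ : ℕ+ =>
        (∏ J ∈ Finset.Icc 1 ℓ,
            max ((J : ℝ) * Υ J) (∑' j : ℕ+, if J < j then Υ j else 0)) ^ ((1 : ℝ) / (ℓ : ℝ)))
      atTop (nhds 0) ∧
    (∀ ℓ : ℕ+,
      (∏ J ∈ Finset.Icc 1 ℓ,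
          max ((J : ℝ) * Υ J) (∑' j : ℕ+, if J < j then Υ j else 0)) ^ ((1 : ℝ) / (ℓ : ℝ))
        ≤ (1 / (ℓ : ℝ)) * ∑ J ∈ Finset.Icc 1 ℓ, (J : ℝ) * Υ J
          + (1 / (ℓ : ℝ)) * ∑ J ∈ Finset.Icc 1 ℓ, ∑' j : ℕ+, if J < j then Υ j else 0) ∧
    Tendsto (fun ℓ : ℕ+ => (1 / (ℓ : ℝ)) * ∑ J ∈ Finset.Icc 1 ℓ, (J : ℝ) * Υ J)
      atTop (nhds 0) ∧
    Tendsto (fun ℓ : ℕ+ =>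
        (1 / (ℓ : ℝ)) * ∑ J ∈ Finset.Icc 1 ℓ, ∑' j : ℕ+, if J < j then Υ j else 0)
      atTop (nhds 0) := by
  have hJΥ : ∀ J : ℕ+, 0 ≤ (J : ℝ) * Υ J := fun J => mul_nonneg J.val.cast_nonneg (hΥ J)
  have htail : Tendsto (tailSum Υ) atTop (𝓝 0) := tendsto_tailSum_atTop hsum
  have hΥ0 : Tendsto Υ atTop (𝓝 0) := hsum.tendsto_cofinite_zero.mono_left atTop_le_cofinite
  have hweighted : Tendsto (fun ℓ : ℕ+ => 1 / (ℓ : ℝ) * ∑ J ∈ Icc 1 ℓ, (J : ℝ) * Υ J)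
      atTop (𝓝 0) := by
    refine squeeze_zero (fun ℓ => mul_nonneg (by positivity) (sum_nonneg fun J _ => hJΥ J))
      (fun ℓ => mul_le_mul_of_nonneg_left (PNat.sum_Icc_one_mul_le_sum_add_tailSum hΥ hsum ℓ)
        (by positivity)) ?_
    simpa using (hΥ0.add htail).cesaro_pnat
  have hamgm : ∀ ℓ : ℕ+, (∏ J ∈ Icc 1 ℓ, max ((J : ℝ) * Υ J) (tailSum Υ J)) ^ (1 / (ℓ : ℝ))
      ≤ 1 / (ℓ : ℝ) * ∑ J ∈ Icc 1 ℓ, (J : ℝ) * Υ J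
        + 1 / (ℓ : ℝ) * ∑ J ∈ Icc 1 ℓ, tailSum Υ J := fun ℓ => by
    simpa only [PNat.card_Icc_one] using Real.geom_mean_max_le_arith_mean_add
      (nonempty_Icc.2 (one_le (a := ℓ))) (fun J _ => hJΥ J) (fun J _ => tailSum_nonneg hΥ J)
  refine ⟨squeeze_zero (fun ℓ => ?_) hamgm (by simpa using hweighted.add htail.cesaro_pnat),
    hamgm, hweighted, htail.cesaro_pnat⟩
  exact Real.rpow_nonneg (prod_nonneg fun J _ => (hJΥ J).trans (le_max_left _ _)) _
end

section
/- For every real θ > 0, lim_{m→∞} m^{-1/θ} · log( Σ_{ℓ=0}^∞ m^ℓ/(ℓ!)^θ ) = θ. -/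
/-! Put `m = x ^ θ`, so that the terms become `(x ^ ℓ / ℓ!) ^ θ`. Since
`(x + 1) ^ ℓ / ℓ! ≤ e ^ (x + 1)`, the `ℓ`-th term is at most `e ^ (θ (x + 1)) q ^ ℓ` with
`q = (x / (x + 1)) ^ θ`, and the geometric series `∑ q ^ ℓ` is `O(x)`; hence
`log S ≤ θ x + O(log x)`. Conversely, Stirling's upper bound for `⌊x⌋!` shows that the single
term `ℓ = ⌊x⌋` is already `e ^ (θ x - O(log x))`. -/

open Filter Real
open scoped Nat

theorem log_factorial_le_stirling {n : ℕ} (hn : n ≠ 0) :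
    log n ! ≤ n * log n - n + log n / 2 + 1 := by
  obtain ⟨k, rfl⟩ := Nat.exists_eq_succ_of_ne_zero hn
  have hseq : Stirling.stirlingSeq (k + 1) ≤ exp 1 / √2 :=
    Stirling.stirlingSeq_one ▸ Stirling.stirlingSeq'_antitone (Nat.zero_le k)
  have hk : (0 : ℝ) < (k + 1 : ℕ) := by positivity
  have hfact : ((k + 1)! : ℝ) ≤ exp 1 * (√((k + 1 : ℕ)) * ((k + 1 : ℕ) / exp 1) ^ (k + 1)) := by
    rw [Stirling.stirlingSeq, div_le_iff₀ (by positivity)] at hseq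
    calc ((k + 1)! : ℝ) ≤ exp 1 / √2 * (√(2 * (k + 1 : ℕ)) * ((k + 1 : ℕ) / exp 1) ^ (k + 1)) :=
          hseq
      _ = _ := by rw [sqrt_mul zero_le_two]; field_simp
  calc log (k + 1)! ≤ log (exp 1 * (√((k + 1 : ℕ)) * ((k + 1 : ℕ) / exp 1) ^ (k + 1))) :=
        log_le_log (by positivity) hfact
    _ = _ := by
      rw [log_mul (by positivity) (by positivity), log_mul (by positivity) (by positivity),
        log_sqrt hk.le, log_pow, log_div hk.ne' (exp_pos 1).ne', log_exp]
      ring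

theorem sub_le_log_pow_floor_div_factorial {x : ℝ} (hx : 1 ≤ x) :
    x - log x / 2 - 2 ≤ log (x ^ ⌊x⌋₊ / ⌊x⌋₊ !) := by
  set L := ⌊x⌋₊
  have hL : L ≠ 0 := (Nat.floor_pos.2 hx).ne'
  have hL0 : (0 : ℝ) < L := by positivity
  have hLx : (L : ℝ) ≤ x := Nat.floor_le (by linarith)
  have hxL : x < L + 1 := Nat.lt_floor_add_one x
  have hlog : log L ≤ log x := log_le_log hL0 hLx
  rw [log_div (by positivity) (by positivity), log_pow]
  nlinarith [log_factorial_le_stirling hL]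

section

variable {θ : ℝ}

theorem rpow_pow_div_factorial_le (hθ : 0 ≤ θ) {x : ℝ} (hx : 0 ≤ x) (ℓ : ℕ) :
    (x ^ ℓ / ℓ !) ^ θ ≤ exp (θ * (x + 1)) * ((x / (x + 1)) ^ θ) ^ ℓ := by
  have hsplit : x ^ ℓ / ℓ ! = (x + 1) ^ ℓ / ℓ ! * (x / (x + 1)) ^ ℓ := by
    rw [div_pow]; field_simp
  have hle : x ^ ℓ / ℓ ! ≤ exp (x + 1) * (x / (x + 1)) ^ ℓ := by
    rw [hsplit]
    gcongr
    exact Real.pow_div_factorial_le_exp _ (by linarith) ℓ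
  calc (x ^ ℓ / ℓ !) ^ θ ≤ (exp (x + 1) * (x / (x + 1)) ^ ℓ) ^ θ :=
        rpow_le_rpow (by positivity) hle hθ
    _ = _ := by
      rw [mul_rpow (exp_pos _).le (by positivity), ← exp_mul, mul_comm (x + 1),
        rpow_pow_comm (by positivity)]

theorem rpow_div_add_one_lt_one (hθ : 0 < θ) {x : ℝ} (hx : 0 ≤ x) : (x / (x + 1)) ^ θ < 1 :=
  rpow_lt_one (by positivity) ((div_lt_one (by linarith)).2 (by linarith)) hθ

theorem summable_rpow_pow_div_factorial (hθ : 0 < θ) {x : ℝ} (hx : 0 ≤ x) :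
    Summable fun ℓ : ℕ => (x ^ ℓ / ℓ !) ^ θ :=
  .of_nonneg_of_le (fun _ => by positivity) (rpow_pow_div_factorial_le hθ.le hx)
    ((summable_geometric_of_lt_one (by positivity) (rpow_div_add_one_lt_one hθ hx)).mul_left _)

theorem inv_one_sub_rpow_div_add_one_le (hθ : 0 < θ) {x : ℝ} (hx : 0 ≤ x) :
    (1 - (x / (x + 1)) ^ θ)⁻¹ ≤ (x + 1 + θ) / θ := by
  have hq : x / (x + 1) ≤ exp (-(x + 1)⁻¹) := by
    have := add_one_le_exp (-(x + 1)⁻¹)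
    have h : x / (x + 1) = -(x + 1)⁻¹ + 1 := by field_simp; ring
    linarith
  have hqθ : (x / (x + 1)) ^ θ ≤ (x + 1) / (x + 1 + θ) := by
    calc (x / (x + 1)) ^ θ ≤ exp (-(x + 1)⁻¹) ^ θ := rpow_le_rpow (by positivity) hq hθ.le
      _ = (exp (θ / (x + 1)))⁻¹ := by rw [← exp_mul, ← exp_neg]; ring_nf
      _ ≤ (θ / (x + 1) + 1)⁻¹ := inv_anti₀ (by positivity) (add_one_le_exp _)
      _ = (x + 1) / (x + 1 + θ) := by field_simp; ring
  rw [inv_le_comm₀ (by linarith [rpow_div_add_one_lt_one hθ hx]) (by positivity), inv_div]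
  calc θ / (x + 1 + θ) = 1 - (x + 1) / (x + 1 + θ) := by field_simp; ring
    _ ≤ 1 - (x / (x + 1)) ^ θ := by linarith

theorem tsum_rpow_pow_div_factorial_le (hθ : 0 < θ) {x : ℝ} (hx : 0 ≤ x) :
    ∑' ℓ : ℕ, (x ^ ℓ / ℓ !) ^ θ ≤ exp (θ * (x + 1)) * ((x + 1 + θ) / θ) := by
  have hq := rpow_div_add_one_lt_one hθ hx
  calc ∑' ℓ : ℕ, (x ^ ℓ / ℓ !) ^ θ ≤ ∑' ℓ : ℕ, exp (θ * (x + 1)) * ((x / (x + 1)) ^ θ) ^ ℓ :=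
        (summable_rpow_pow_div_factorial hθ hx).tsum_le_tsum (rpow_pow_div_factorial_le hθ.le hx)
          ((summable_geometric_of_lt_one (by positivity) hq).mul_left _)
    _ = exp (θ * (x + 1)) * (1 - (x / (x + 1)) ^ θ)⁻¹ := by
      rw [tsum_mul_left, tsum_geometric_of_lt_one (by positivity) hq]
    _ ≤ _ := mul_le_mul_of_nonneg_left (inv_one_sub_rpow_div_add_one_le hθ hx) (exp_pos _).le

theorem log_tsum_rpow_pow_div_factorial_le (hθ : 0 < θ) {x : ℝ} (hx : 1 ≤ x) :
    log (∑' ℓ : ℕ, (x ^ ℓ / ℓ !) ^ θ) ≤ θ * (x + 1) + log ((2 + θ) / θ) + log x := by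
  have hpos : 0 < ∑' ℓ : ℕ, (x ^ ℓ / ℓ !) ^ θ :=
    (summable_rpow_pow_div_factorial hθ (by linarith)).tsum_pos (fun _ => by positivity) 0
      (by simp)
  have hlin : (x + 1 + θ) / θ ≤ x * ((2 + θ) / θ) := by
    rw [mul_div_assoc', div_le_div_iff_of_pos_right hθ]; nlinarith
  calc log (∑' ℓ : ℕ, (x ^ ℓ / ℓ !) ^ θ) ≤ log (exp (θ * (x + 1)) * (x * ((2 + θ) / θ))) :=
        log_le_log hpos ((tsum_rpow_pow_div_factorial_le hθ (by linarith)).trans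
          (mul_le_mul_of_nonneg_left hlin (exp_pos _).le))
    _ = _ := by
      rw [log_mul (exp_pos _).ne' (by positivity), log_exp, log_mul (by positivity) (by positivity)]
      ring

theorem le_log_tsum_rpow_pow_div_factorial (hθ : 0 < θ) {x : ℝ} (hx : 1 ≤ x) :
    θ * (x - log x / 2 - 2) ≤ log (∑' ℓ : ℕ, (x ^ ℓ / ℓ !) ^ θ) := by
  have hterm : 0 < x ^ ⌊x⌋₊ / ⌊x⌋₊ ! := by positivity
  calc θ * (x - log x / 2 - 2) ≤ θ * log (x ^ ⌊x⌋₊ / ⌊x⌋₊ !) :=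
        mul_le_mul_of_nonneg_left (sub_le_log_pow_floor_div_factorial hx) hθ.le
    _ = log ((x ^ ⌊x⌋₊ / ⌊x⌋₊ !) ^ θ) := (log_rpow hterm θ).symm
    _ ≤ _ := log_le_log (by positivity) <|
        (summable_rpow_pow_div_factorial hθ (by linarith)).le_tsum _ (fun _ _ => by positivity)

theorem tendsto_inv_mul_linear_add_log (a b c : ℝ) :
    Tendsto (fun x : ℝ => x⁻¹ * (a * x + b + c * log x)) atTop (nhds a) := by
  have h : Tendsto (fun x : ℝ => a + b * x⁻¹ + c * (log x / x)) atTop (nhds (a + b * 0 + c * 0)) :=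
    (tendsto_const_nhds.add (tendsto_inv_atTop_zero.const_mul b)).add
      (isLittleO_log_id_atTop.tendsto_div_nhds_zero.const_mul c)
  rw [mul_zero, mul_zero, add_zero, add_zero] at h
  refine h.congr' ?_
  filter_upwards [eventually_gt_atTop 0] with x hx
  field_simp

theorem tendsto_inv_mul_log_tsum_rpow_pow_div_factorial (hθ : 0 < θ) :
    Tendsto (fun x : ℝ => x⁻¹ * log (∑' ℓ : ℕ, (x ^ ℓ / ℓ !) ^ θ)) atTop (nhds θ) := by
  refine tendsto_of_tendsto_of_tendsto_of_le_of_le'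
    (tendsto_inv_mul_linear_add_log θ (-2 * θ) (-(θ / 2)))
    (tendsto_inv_mul_linear_add_log θ (θ + log ((2 + θ) / θ)) 1) ?_ ?_ <;>
  filter_upwards [eventually_ge_atTop 1] with x hx <;>
  refine mul_le_mul_of_nonneg_left ?_ (by positivity)
  · linarith [le_log_tsum_rpow_pow_div_factorial hθ hx]
  · linarith [log_tsum_rpow_pow_div_factorial_le hθ hx]

end

theorem log_sum_pow_factorial_asymptotic (θ : ℝ) (hθ : 0 < θ) :
    Tendsto (fun m : ℝ =>
        m ^ (-(1 / θ)) * Real.log (∑' ℓ : ℕ, m ^ ℓ / (Nat.factorial ℓ : ℝ) ^ θ))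
      atTop (nhds θ) := by
  refine ((tendsto_inv_mul_log_tsum_rpow_pow_div_factorial hθ).comp
    (tendsto_rpow_atTop (one_div_pos.2 hθ))).congr' ?_
  filter_upwards [eventually_gt_atTop 0] with m hm
  have hterm (ℓ : ℕ) : ((m ^ (1 / θ)) ^ ℓ / ℓ !) ^ θ = m ^ ℓ / (ℓ ! : ℝ) ^ θ := by
    rw [div_rpow (by positivity) (by positivity), rpow_pow_comm hm.le,
      ← rpow_mul (by positivity), one_div_mul_cancel hθ.ne', rpow_one]
  simp only [Function.comp_apply, hterm, rpow_neg hm.le]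
end

section
/- For θ > 0 and m ≥ 1, setting ℓ* = ⌊m^{1/θ}⌋, one has m^{ℓ*}/(ℓ*!)^θ ≤ Σ_{ℓ=0}^∞ m^ℓ/(ℓ!)^θ ≤ (2ℓ* + Σ_{ℓ=0}^∞ 2^{-θℓ}) · m^{ℓ*}/(ℓ*!)^θ. -/
/-!
Write `a ℓ = m ^ ℓ / (ℓ !) ^ θ` and `L = ⌊m ^ (1/θ)⌋₊`, so that `L ^ θ ≤ m ≤ (L + 1) ^ θ`. Since
`a (ℓ + 1) = a ℓ * m / (ℓ + 1) ^ θ`, the terms increase up to `L` and decrease afterwards, and the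
lower bound is just one term of the series. For the upper bound, the `2L` terms below `2L` are each
at most `a L`, and `a (2L + k) ≤ 2 ^ (-θ k) * a L` because `(2L + k)! ≥ 2 ^ k (L + 1) ^ (L + k) L !`
when `L ≥ 2`. For `L = 1` (that is `1 ≤ m ≤ 2 ^ θ`) this factorial bound fails at small `k`; there
`a 0 + a 2 ≤ m (1 + 2 ^ (-θ))` since `(m - 1)(2 ^ θ - m) ≥ 0`, the terms `a 3, a 4, a 5` are pushed
onto the budget `m (1 + 4 ^ (-θ) + 8 ^ (-θ))` by the exchange inequality
`x ^ θ + y ^ θ ≤ z ^ θ + (x y / z) ^ θ` for `x, y ≤ z`, and `a (k + 6) ≤ m 2 ^ (-θ (k + 4))`.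
-/

open Nat Filter Topology Finset

theorem Nat.two_mul_succ_pow_mul_factorial_le {L : ℕ} (hL : 2 ≤ L) :
    2 * ((L + 1) ^ (L + 1) * L !) ≤ (L + L + 1)! := by
  obtain ⟨E, rfl⟩ : ∃ E, L = E + 1 := ⟨L - 1, by omega⟩
  have h := factorial_mul_pow_le_factorial (m := E + 1) (n := E)
  have hsq : 2 * (E + 2) ^ 2 ≤ (2 * E + 3) * (2 * E + 2) := by nlinarith
  calc 2 * ((E + 1 + 1) ^ (E + 1 + 1) * (E + 1)!)
      = (2 * (E + 2) ^ 2) * ((E + 1)! * (E + 1 + 1) ^ E) := by ring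
    _ ≤ ((2 * E + 3) * (2 * E + 2)) * (E + 1 + E)! := Nat.mul_le_mul hsq h
    _ = (E + 1 + (E + 1) + 1)! := by
      rw [show E + 1 + (E + 1) + 1 = (E + 1 + E) + 1 + 1 by omega, factorial_succ,
        factorial_succ]
      ring_nf

theorem Nat.two_pow_mul_succ_pow_mul_factorial_le {L : ℕ} (hL : 2 ≤ L) (k : ℕ) :
    2 ^ k * ((L + 1) ^ (L + k) * L !) ≤ (L + (L + k))! := by
  rcases k with _ | k
  · simpa [mul_comm] using factorial_mul_pow_le_factorial (m := L) (n := L)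
  induction k with
  | zero => simpa [← add_assoc] using two_mul_succ_pow_mul_factorial_le hL
  | succ k ih =>
    calc 2 ^ (k + 2) * ((L + 1) ^ (L + (k + 2)) * L !)
        = 2 ^ (k + 1) * ((L + 1) ^ (L + (k + 1)) * L !) * (2 * (L + 1)) := by ring
      _ ≤ (L + (L + (k + 1)))! * (L + (L + (k + 1)) + 1) := Nat.mul_le_mul ih (by omega)
      _ = (L + (L + (k + 2)))! := by
        rw [show L + (L + (k + 2)) = L + (L + (k + 1)) + 1 by omega, factorial_succ]; ring

theorem Nat.two_pow_le_factorial_add_six (k : ℕ) : 2 ^ (2 * k + 9) ≤ (k + 6)! := by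
  induction k with
  | zero => decide
  | succ k ih =>
    calc 2 ^ (2 * (k + 1) + 9) = 4 * 2 ^ (2 * k + 9) := by ring
      _ ≤ (k + 6 + 1) * (k + 6)! := Nat.mul_le_mul (by omega) ih
      _ = (k + 1 + 6)! := (factorial_succ (k + 6)).symm

theorem Real.rpow_add_rpow_le_rpow_add_rpow_mul_div {x y z t : ℝ} (hx : 0 ≤ x) (hy : 0 ≤ y)
    (hz : 0 < z) (hxz : x ≤ z) (hyz : y ≤ z) (ht : 0 ≤ t) :
    x ^ t + y ^ t ≤ z ^ t + (x * y / z) ^ t := by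
  have hzt : 0 < z ^ t := Real.rpow_pos_of_pos hz t
  have hprod : (x * y / z) ^ t * z ^ t = x ^ t * y ^ t := by
    rw [← Real.mul_rpow (by positivity) hz.le, div_mul_cancel₀ _ hz.ne', Real.mul_rpow hx hy]
  have hxt : x ^ t ≤ z ^ t := Real.rpow_le_rpow hx hxz ht
  have hyt : y ^ t ≤ z ^ t := Real.rpow_le_rpow hy hyz ht
  nlinarith [mul_nonneg (sub_nonneg.2 hxt) (sub_nonneg.2 hyt)]

/-- Two exchanges: `(2/3, 1/3) ↦ (1, 2/9)`, then `(2/9, 2/15) ↦ (1/4, 16/135)`. -/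
theorem Real.two_thirds_rpow_add_third_rpow_add_two_fifteenths_rpow_le {θ : ℝ} (hθ : 0 ≤ θ) :
    (2 / 3 : ℝ) ^ θ + (1 / 3) ^ θ + (2 / 15) ^ θ ≤ 1 + (1 / 4) ^ θ + (1 / 8) ^ θ := by
  have h1 := rpow_add_rpow_le_rpow_add_rpow_mul_div (x := 2 / 3) (y := 1 / 3) (z := 1)
    (by norm_num) (by norm_num) one_pos (by norm_num) (by norm_num) hθ
  have h2 := rpow_add_rpow_le_rpow_add_rpow_mul_div (x := 2 / 9) (y := 2 / 15) (z := 1 / 4)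
    (by norm_num) (by norm_num) (by norm_num) (by norm_num) (by norm_num) hθ
  have h3 : (2 / 9 * (2 / 15) / (1 / 4) : ℝ) ^ θ ≤ (1 / 8) ^ θ :=
    rpow_le_rpow (by norm_num) (by norm_num) hθ
  rw [show (2 / 3 * (1 / 3) / 1 : ℝ) = 2 / 9 by norm_num, one_rpow] at h1
  linarith

theorem summable_two_rpow_neg_mul {θ : ℝ} (hθ : 0 < θ) :
    Summable fun ℓ : ℕ => (2 : ℝ) ^ (-θ * ℓ) := by
  simp_rw [Real.rpow_mul_natCast zero_le_two]
  exact summable_geometric_of_lt_one (by positivity)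
    (Real.rpow_lt_one_of_one_lt_of_neg one_lt_two (neg_neg_of_pos hθ))

theorem two_rpow_neg_mul_natCast (θ : ℝ) (k : ℕ) :
    (2 : ℝ) ^ (-θ * k) = (((2 : ℝ) ^ k)⁻¹) ^ θ := by
  rw [Real.inv_rpow (by positivity), ← Real.rpow_pow_comm zero_le_two, ← Real.rpow_mul_natCast
    zero_le_two, neg_mul, Real.rpow_neg zero_le_two]

theorem tsum_le_of_sum_range_le_of_tail_le {f g : ℕ → ℝ} (hf : Summable f) (hg : Summable g)
    {n p : ℕ} {A c : ℝ} (hhead : ∑ i ∈ range n, f i ≤ (A + ∑ j ∈ range p, g j) * c)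
    (htail : ∀ k, f (k + n) ≤ g (k + p) * c) : ∑' i, f i ≤ (A + ∑' j, g j) * c := by
  have htail_sum : ∑' k, f (k + n) ≤ (∑' k, g (k + p)) * c := by
    rw [← tsum_mul_right]
    exact ((summable_nat_add_iff n).2 hf).tsum_le_tsum htail
      (((summable_nat_add_iff p).2 hg).mul_right c)
  rw [← hf.sum_add_tsum_nat_add n, ← hg.sum_add_tsum_nat_add p]
  linarith

theorem natFloor_rpow_one_div_rpow_le {θ m : ℝ} (hθ : 0 < θ) (hm : 0 ≤ m) :
    (⌊m ^ (1 / θ)⌋₊ : ℝ) ^ θ ≤ m := by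
  calc (⌊m ^ (1 / θ)⌋₊ : ℝ) ^ θ ≤ (m ^ (1 / θ)) ^ θ :=
        Real.rpow_le_rpow (cast_nonneg _) (Nat.floor_le (by positivity)) hθ.le
    _ = m := by rw [one_div, Real.rpow_inv_rpow hm hθ.ne']

theorem le_natFloor_rpow_one_div_add_one_rpow {θ m : ℝ} (hθ : 0 < θ) (hm : 0 ≤ m) :
    m ≤ ((⌊m ^ (1 / θ)⌋₊ : ℝ) + 1) ^ θ := by
  calc m = (m ^ (1 / θ)) ^ θ := by rw [one_div, Real.rpow_inv_rpow hm hθ.ne']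
    _ ≤ ((⌊m ^ (1 / θ)⌋₊ : ℝ) + 1) ^ θ :=
        Real.rpow_le_rpow (by positivity) (Nat.lt_floor_add_one _).le hθ.le

noncomputable def PowFactorialSeries.term (θ m : ℝ) (ℓ : ℕ) : ℝ := m ^ ℓ / (ℓ ! : ℝ) ^ θ

namespace PowFactorialSeries

variable {θ m : ℝ}

theorem term_one : term θ m 1 = m := by simp [term]

theorem term_nonneg (hm : 0 ≤ m) (ℓ : ℕ) : 0 ≤ term θ m ℓ := by unfold term; positivity

theorem term_succ (ℓ : ℕ) : term θ m (ℓ + 1) = term θ m ℓ * (m / ((ℓ : ℝ) + 1) ^ θ) := by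
  have h1 : (0 : ℝ) ≤ (ℓ : ℝ) + 1 := by positivity
  simp only [term, factorial_succ, cast_mul, cast_succ, pow_succ]
  rw [Real.mul_rpow h1 (by positivity)]
  ring

theorem summable_term (hθ : 0 < θ) (m : ℝ) : Summable (term θ m) := by
  refine summable_of_ratio_norm_eventually_le (r := 1 / 2) (by norm_num) ?_
  have hlim : Tendsto (fun n : ℕ => |m| / ((n : ℝ) + 1) ^ θ) atTop (𝓝 0) :=
    tendsto_const_nhds.div_atTop <| (tendsto_rpow_atTop hθ).comp
      (tendsto_atTop_add_const_right _ 1 tendsto_natCast_atTop_atTop)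
  filter_upwards [hlim.eventually (ge_mem_nhds (by norm_num : (0 : ℝ) < 1 / 2))] with n hn
  rw [term_succ, norm_mul, mul_comm, Real.norm_eq_abs (_ / _), abs_div,
    abs_of_nonneg (by positivity : (0 : ℝ) ≤ ((n : ℝ) + 1) ^ θ)]
  exact mul_le_mul_of_nonneg_right hn (norm_nonneg _)

theorem term_le_term_succ {ℓ : ℕ} (h : ((ℓ : ℝ) + 1) ^ θ ≤ m) :
    term θ m ℓ ≤ term θ m (ℓ + 1) := by
  have hpos : 0 < ((ℓ : ℝ) + 1) ^ θ := by positivity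
  rw [term_succ]
  exact le_mul_of_one_le_right (term_nonneg (hpos.le.trans h) ℓ) ((one_le_div hpos).2 h)

theorem term_succ_le_term (hm : 0 ≤ m) {ℓ : ℕ} (h : m ≤ ((ℓ : ℝ) + 1) ^ θ) :
    term θ m (ℓ + 1) ≤ term θ m ℓ := by
  rw [term_succ]
  exact mul_le_of_le_one_right (term_nonneg hm ℓ) (div_le_one_of_le₀ h (by positivity))

theorem term_le_term_of_rpow_bounds (hθ : 0 ≤ θ) {L : ℕ} (hLm : (L : ℝ) ^ θ ≤ m)
    (hmL : m ≤ ((L : ℝ) + 1) ^ θ) (ℓ : ℕ) : term θ m ℓ ≤ term θ m L := by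
  rcases le_total ℓ L with hℓ | hℓ
  · refine monotoneOn_of_le_succ (s := Set.Iic L) Set.ordConnected_Iic (fun n _ _ hn => ?_)
      hℓ Set.self_mem_Iic hℓ
    rw [Order.succ_eq_add_one, Set.mem_Iic] at hn
    refine term_le_term_succ ((Real.rpow_le_rpow (by positivity) ?_ hθ).trans hLm)
    exact_mod_cast hn
  · refine antitoneOn_of_succ_le (s := Set.Ici L) Set.ordConnected_Ici (fun n _ hn _ => ?_)
      Set.self_mem_Ici hℓ hℓ
    refine term_succ_le_term ((Real.rpow_nonneg (cast_nonneg L) θ).trans hLm)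
      (hmL.trans (Real.rpow_le_rpow (by positivity) ?_ hθ))
    exact_mod_cast Nat.add_le_add_right hn 1

theorem term_add_le_mul_rpow (hθ : 0 ≤ θ) (hm : 0 ≤ m) {M x : ℝ} (hM : 0 ≤ M) (hx : 0 ≤ x)
    (hmM : m ≤ M ^ θ) {q d : ℕ} (h : M ^ d * q ! ≤ x * (q + d)!) :
    term θ m (q + d) ≤ term θ m q * x ^ θ := by
  have hpow : m ^ d ≤ (M ^ d) ^ θ := by
    rw [← Real.rpow_pow_comm hM]; exact pow_le_pow_left₀ hm hmM d
  have hfact : (M ^ d) ^ θ * (q ! : ℝ) ^ θ ≤ x ^ θ * ((q + d)! : ℝ) ^ θ := by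
    rw [← Real.mul_rpow (by positivity) (by positivity), ← Real.mul_rpow hx (by positivity)]
    exact Real.rpow_le_rpow (by positivity) h hθ
  have hq : 0 < (q ! : ℝ) ^ θ := by positivity
  unfold term
  rw [div_le_iff₀ (by positivity), pow_add]
  calc m ^ q * m ^ d ≤ m ^ q * (M ^ d) ^ θ := by gcongr
    _ = m ^ q / (q ! : ℝ) ^ θ * ((M ^ d) ^ θ * (q ! : ℝ) ^ θ) := by field_simp
    _ ≤ m ^ q / (q ! : ℝ) ^ θ * (x ^ θ * ((q + d)! : ℝ) ^ θ) := by gcongr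
    _ = m ^ q / (q ! : ℝ) ^ θ * x ^ θ * ((q + d)! : ℝ) ^ θ := by ring

theorem tsum_term_le_of_two_le (hθ : 0 < θ) {L : ℕ} (hL : 2 ≤ L) (hLm : (L : ℝ) ^ θ ≤ m)
    (hmL : m ≤ ((L : ℝ) + 1) ^ θ) :
    ∑' ℓ, term θ m ℓ ≤ (2 * L + ∑' ℓ : ℕ, (2 : ℝ) ^ (-θ * ℓ)) * term θ m L := by
  have hm : 0 ≤ m := (Real.rpow_nonneg (cast_nonneg L) θ).trans hLm
  refine tsum_le_of_sum_range_le_of_tail_le (n := 2 * L) (p := 0) (summable_term hθ m)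
    (summable_two_rpow_neg_mul hθ) ?_ fun k => ?_
  · calc ∑ i ∈ range (2 * L), term θ m i ≤ ∑ _i ∈ range (2 * L), term θ m L :=
          sum_le_sum fun i _ => term_le_term_of_rpow_bounds hθ.le hLm hmL i
      _ = _ := by simp
  · rw [two_rpow_neg_mul_natCast, show k + 2 * L = L + (L + k) by ring, add_zero, mul_comm]
    refine term_add_le_mul_rpow hθ.le hm (by positivity) (by positivity) hmL ?_
    rw [le_inv_mul_iff₀ (by positivity)]
    exact_mod_cast Nat.two_pow_mul_succ_pow_mul_factorial_le hL k

theorem term_zero_add_term_two_le (hm : 1 ≤ m) (hm2 : m ≤ 2 ^ θ) :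
    term θ m 0 + term θ m 2 ≤ m + m * (1 / 2) ^ θ := by
  have key : m + m * (1 / 2) ^ θ - (term θ m 0 + term θ m 2) = (m - 1) * (2 ^ θ - m) / 2 ^ θ := by
    simp only [term, factorial_zero, factorial_two, cast_one, cast_ofNat, pow_zero,
      Real.one_rpow, Real.div_rpow zero_le_one zero_le_two]
    field_simp
    ring
  have : 0 ≤ (m - 1) * (2 ^ θ - m) / 2 ^ θ :=
    div_nonneg (mul_nonneg (sub_nonneg.2 hm) (sub_nonneg.2 hm2)) (by positivity)
  linarith

theorem tsum_term_le_of_le_two_rpow (hθ : 0 < θ) (hm : 1 ≤ m) (hm2 : m ≤ 2 ^ θ) :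
    ∑' ℓ, term θ m ℓ ≤ (2 + ∑' ℓ : ℕ, (2 : ℝ) ^ (-θ * ℓ)) * m := by
  have hm0 : 0 ≤ m := zero_le_one.trans hm
  have hstep {d : ℕ} {x : ℝ} (hx : 0 ≤ x) (h : (2 : ℝ) ^ d ≤ x * (1 + d)!) :
      term θ m (1 + d) ≤ m * x ^ θ := by
    simpa [term_one] using term_add_le_mul_rpow hθ.le hm0 zero_le_two hx hm2 (q := 1) (by simpa)
  refine tsum_le_of_sum_range_le_of_tail_le (n := 6) (p := 4) (summable_term hθ m)
    (summable_two_rpow_neg_mul hθ) ?_ fun k => ?_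
  · have h3 : term θ m 3 ≤ m * (2 / 3) ^ θ := hstep (d := 2) (by norm_num) (by norm_num [factorial])
    have h4 : term θ m 4 ≤ m * (1 / 3) ^ θ := hstep (d := 3) (by norm_num) (by norm_num [factorial])
    have h5 : term θ m 5 ≤ m * (2 / 15) ^ θ :=
      hstep (d := 4) (by norm_num) (by norm_num [factorial])
    have hpair := Real.two_thirds_rpow_add_third_rpow_add_two_fifteenths_rpow_le hθ.le
    have h02 := term_zero_add_term_two_le hm hm2
    simp only [sum_range_succ, sum_range_zero, two_rpow_neg_mul_natCast, term_one]
    norm_num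
    nlinarith [mul_le_mul_of_nonneg_left hpair hm0]
  · rw [two_rpow_neg_mul_natCast, show k + 6 = 1 + (5 + k) by ring, mul_comm]
    refine hstep (by positivity) ?_
    rw [le_inv_mul_iff₀ (by positivity), show 1 + (5 + k) = k + 6 by ring]
    exact_mod_cast (show 2 ^ (k + 4) * 2 ^ (5 + k) = 2 ^ (2 * k + 9) by ring) ▸
      Nat.two_pow_le_factorial_add_six k

end PowFactorialSeries

open PowFactorialSeries

theorem sum_pow_factorial_bounds (θ : ℝ) (hθ : 0 < θ) (m : ℝ) (hm : 1 ≤ m) :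
    m ^ (⌊m ^ (1 / θ)⌋₊) / (Nat.factorial ⌊m ^ (1 / θ)⌋₊ : ℝ) ^ θ
        ≤ (∑' ℓ : ℕ, m ^ ℓ / (Nat.factorial ℓ : ℝ) ^ θ) ∧
    (∑' ℓ : ℕ, m ^ ℓ / (Nat.factorial ℓ : ℝ) ^ θ)
        ≤ (2 * (⌊m ^ (1 / θ)⌋₊ : ℝ) + ∑' ℓ : ℕ, (2 : ℝ) ^ (-θ * ℓ)) *
          (m ^ (⌊m ^ (1 / θ)⌋₊) / (Nat.factorial ⌊m ^ (1 / θ)⌋₊ : ℝ) ^ θ) := by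
  have hm0 : 0 ≤ m := zero_le_one.trans hm
  have hLm := natFloor_rpow_one_div_rpow_le hθ hm0
  have hmL := le_natFloor_rpow_one_div_add_one_rpow hθ hm0
  have hL : 1 ≤ ⌊m ^ (1 / θ)⌋₊ :=
    Nat.le_floor (by simpa using Real.one_le_rpow hm (by positivity))
  refine ⟨(summable_term hθ m).le_tsum _ fun ℓ _ => term_nonneg hm0 ℓ, ?_⟩
  rcases hL.eq_or_lt with hL1 | hL2
  · rw [← hL1] at hmL ⊢
    norm_num at hmL
    simpa [term] using tsum_term_le_of_le_two_rpow hθ hm hmL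
  · exact tsum_term_le_of_two_le hθ hL2 hLm hmL
end

section
/- Let ρ > 1, σ ≥ 0, C > 0, and define γ_∅ = 1 and γ_v = (|v|!)^σ ∏_{j∈v} C·j^{-ρ} for nonempty finite v ⊆ ℕ. If ρ ≤ σ, then S(m) = Σ_{v ⊆ ℕ finite} γ_v m^{|v|} diverges for all m ≥ 1/C. -/
/-! The subsets `{1, …, ℓ}` alone already make the series diverge: on them the weight equals
`(ℓ!)^(σ - ρ) (C m)^ℓ ≥ 1`, so the terms do not tend to zero. -/

open Finset Filter Topology
open scoped Nat

theorem not_summable_of_le_norm_comp_injective {α E : Type*} [NormedAddCommGroup E]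
    {f : α → E} {g : ℕ → α} {ε : ℝ} (hg : Function.Injective g) (hε : 0 < ε)
    (h : ∀ n, ε ≤ ‖f (g n)‖) : ¬ Summable f := by
  intro hs
  have hlim : Tendsto (fun n => ‖f (g n)‖) cofinite (𝓝 0) := by
    simpa using (hs.tendsto_cofinite_zero.comp hg.tendsto_cofinite).norm
  obtain ⟨n, hn⟩ := (hlim.eventually (eventually_lt_nhds hε)).exists
  exact (h n).not_gt hn

def PNat.initialSegment (ℓ : ℕ) : Finset ℕ+ :=
  (range ℓ).map ⟨Nat.succPNat, Nat.succPNat_injective⟩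

namespace PNat.initialSegment

@[simp]
theorem card (ℓ : ℕ) : (initialSegment ℓ).card = ℓ := by
  simp [initialSegment]

theorem injective : Function.Injective initialSegment := fun a b h => by
  simpa using congrArg Finset.card h

theorem prod_rpow (ℓ : ℕ) (s : ℝ) : ∏ j ∈ initialSegment ℓ, (j : ℝ) ^ s = (ℓ ! : ℝ) ^ s := by
  rw [initialSegment, prod_map, ← prod_range_add_one_eq_factorial, Nat.cast_prod,
    Real.finsetProd_rpow _ _ (fun i _ => by positivity)]
  simp

theorem weight_eq (ρ σ C m : ℝ) (ℓ : ℕ) :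
    (ℓ ! : ℝ) ^ σ * m ^ ℓ * ∏ j ∈ initialSegment ℓ, C * (j : ℝ) ^ (-ρ)
      = (ℓ ! : ℝ) ^ (σ - ρ) * (C * m) ^ ℓ := by
  rw [prod_mul_distrib, prod_const, card, prod_rpow, sub_eq_add_neg,
    Real.rpow_add (by positivity), mul_pow]
  ring

end PNat.initialSegment

theorem pod_power_weights_divergence_general (ρ σ C : ℝ)
    (hC : 0 < C) (hρσ : ρ ≤ σ) (m : ℝ) (hm : 1 / C ≤ m) :
    ¬ Summable (fun v : Finset ℕ+ =>
        (Nat.factorial v.card : ℝ) ^ σ * m ^ v.card * ∏ j ∈ v, C * (j : ℝ) ^ (-ρ)) := by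
  have hCm : 1 ≤ C * m := by
    rwa [div_le_iff₀ hC, mul_comm] at hm
  refine not_summable_of_le_norm_comp_injective PNat.initialSegment.injective one_pos
    fun ℓ => ?_
  have hweight : 1 ≤ (ℓ ! : ℝ) ^ (σ - ρ) * (C * m) ^ ℓ :=
    one_le_mul_of_one_le_of_one_le
      (Real.one_le_rpow (by exact_mod_cast ℓ.factorial_pos) (sub_nonneg.2 hρσ))
      (one_le_pow₀ hCm)
  simp only [Real.norm_eq_abs, PNat.initialSegment.card, PNat.initialSegment.weight_eq]
  rwa [abs_of_nonneg (zero_le_one.trans hweight)]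

theorem pod_power_weights_divergence (ρ σ C : ℝ) (hρ : 1 < ρ) (hσ : 0 ≤ σ)
    (hC : 0 < C) (hρσ : ρ ≤ σ) (m : ℝ) (hm : 1 / C ≤ m) :
    ¬ Summable (fun v : Finset ℕ+ =>
        (Nat.factorial v.card : ℝ) ^ σ * m ^ v.card * ∏ j ∈ v, C * (j : ℝ) ^ (-ρ)) :=
  pod_power_weights_divergence_general ρ σ C hC hρσ m hm
end

section
/- Let ρ > σ ≥ 0 with ρ > 1, C > 0, and define γ_∅ = 1 and γ_v = (|v|!)^σ ∏_{j∈v} C·j^{-ρ} for nonempty finite v ⊆ ℕ. Then S(m) = Σ_{v ⊆ ℕ finite} γ_v m^{|v|} is finite for all m > 0, and moreover liminf_{m→∞} m^{-1/(ρ-σ)} log S(m) ≥ (ρ-σ)·C^{1/(ρ-σ)}. -/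
/-!
Group the sets `v` by their size `n`. For every `t > 0`, the sum of `∏ j ∈ v, j ^ (-ρ)` over
`|v| = n` is at most `t ^ (-n) * ∏ j, (1 + t * j ^ (-ρ))`; with `t = n ^ ρ` the factors `j ≤ n`
contribute at most `2 ^ n * n ^ (ρ n) / (n !) ^ ρ` and the others at most `exp (n / (ρ - 1))`.
Hence `S(m) ≤ ∑ n, (n !) ^ (-(ρ - σ)) * (c m) ^ n ≤ 2 * exp ((ρ - σ) * (2 c m) ^ (1 / (ρ - σ)))`,
which gives finiteness and keeps `m ^ (-1 / (ρ - σ)) * log S(m)` bounded above (without that,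
the real `liminf` would be a junk value). Conversely the single term `v = {1, …, n}` equals
`(y ^ n / n !) ^ (ρ - σ)` with `y = (m C) ^ (1 / (ρ - σ))`; choosing `n = ⌊y⌋` and bounding `n !`
by Stirling gives `log S(m) ≥ (ρ - σ) * y * (1 - o(1))`.
-/

open Filter Finset Real
open scoped Nat Topology

lemma rpow_neg_le_sub_rpow {ρ x : ℝ} (hρ : 1 ≤ ρ) (hx : 0 < x) :
    (ρ - 1) * (x + 1) ^ (-ρ) ≤ x ^ (1 - ρ) - (x + 1) ^ (1 - ρ) := by
  obtain ⟨c, ⟨hxc, hcx⟩, hc⟩ := exists_hasDerivAt_eq_slope (fun y : ℝ => y ^ (1 - ρ))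
    (fun y => (1 - ρ) * y ^ (1 - ρ - 1)) (lt_add_one x)
    ((continuousOn_id.rpow_const fun y hy => Or.inl (hx.trans_le hy.1).ne'))
    (fun y hy => hasDerivAt_rpow_const (Or.inl (hx.trans hy.1).ne'))
  rw [add_sub_cancel_left, div_one, sub_sub_cancel_left] at hc
  have hmono : (x + 1) ^ (-ρ) ≤ c ^ (-ρ) :=
    rpow_le_rpow_of_nonpos (hx.trans hxc) hcx.le (by linarith)
  nlinarith

lemma sum_Ioc_rpow_neg_le {ρ : ℝ} (hρ : 1 ≤ ρ) {n : ℕ} (hn : n ≠ 0) {M : ℕ} (hnM : n ≤ M) :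
    (ρ - 1) * ∑ j ∈ Ioc n M, (j : ℝ) ^ (-ρ) ≤ (n : ℝ) ^ (1 - ρ) - (M : ℝ) ^ (1 - ρ) := by
  induction M, hnM using Nat.le_induction with
  | base => simp
  | succ M hnM ih =>
    have hM : (0 : ℝ) < M := by exact_mod_cast (Nat.pos_of_ne_zero hn).trans_le hnM
    rw [sum_Ioc_succ_top hnM, mul_add]
    push_cast
    linarith [rpow_neg_le_sub_rpow hρ hM]

lemma rpow_mul_sum_rpow_neg_le {ρ : ℝ} (hρ : 1 < ρ) (n : ℕ) {W : Finset ℕ+}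
    (hW : ∀ j ∈ W, n < (j : ℕ)) :
    (n : ℝ) ^ ρ * ∑ j ∈ W, (j : ℝ) ^ (-ρ) ≤ n / (ρ - 1) := by
  rcases Nat.eq_zero_or_pos n with rfl | hn
  · simp [zero_rpow (by linarith : ρ ≠ 0)]
  set e : ℕ+ ↪ ℕ := ⟨PNat.val, PNat.coe_injective⟩
  set M := n + W.sup e
  have hsub : W.map e ⊆ Ioc n M := by
    simp only [subset_iff, Finset.mem_map, mem_Ioc]
    rintro _ ⟨j, hj, rfl⟩
    exact ⟨hW j hj, le_add_left (le_sup (f := e) hj)⟩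
  have hW' : ∑ j ∈ W, (j : ℝ) ^ (-ρ) ≤ ∑ j ∈ Ioc n M, (j : ℝ) ^ (-ρ) := by
    rw [show ∑ j ∈ W, (j : ℝ) ^ (-ρ) = ∑ j ∈ W.map e, (j : ℝ) ^ (-ρ) by rw [sum_map]; rfl]
    exact sum_le_sum_of_subset_of_nonneg hsub fun j _ _ => by positivity
  have hnR : (0 : ℝ) < n := by exact_mod_cast hn
  have htel := sum_Ioc_rpow_neg_le hρ.le hn.ne' (le_add_right le_rfl : n ≤ M)
  have hM : (0 : ℝ) ≤ (M : ℝ) ^ (1 - ρ) := by positivity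
  rw [le_div_iff₀ (by linarith)]
  calc (n : ℝ) ^ ρ * (∑ j ∈ W, (j : ℝ) ^ (-ρ)) * (ρ - 1)
      ≤ (n : ℝ) ^ ρ * ((n : ℝ) ^ (1 - ρ) - (M : ℝ) ^ (1 - ρ)) := by
        rw [mul_assoc]
        gcongr
        nlinarith
    _ ≤ (n : ℝ) ^ ρ * (n : ℝ) ^ (1 - ρ) := by gcongr; linarith
    _ = n := by rw [← rpow_add hnR, add_sub_cancel, rpow_one]

def pnatsUpTo (n : ℕ) : Finset ℕ+ := (range n).map ⟨Nat.succPNat, Nat.succPNat_injective⟩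

lemma mem_pnatsUpTo {n : ℕ} {j : ℕ+} : j ∈ pnatsUpTo n ↔ (j : ℕ) ≤ n := by
  refine ⟨?_, fun h => mem_map.2 ⟨j.natPred, ?_, j.succPNat_natPred⟩⟩
  · simp only [pnatsUpTo, Finset.mem_map, mem_range]
    rintro ⟨i, hi, rfl⟩
    simpa using hi
  · have := j.pos
    rw [mem_range, PNat.natPred]
    omega

lemma card_pnatsUpTo (n : ℕ) : (pnatsUpTo n).card = n := by simp [pnatsUpTo]

lemma prod_pnatsUpTo_rpow (n : ℕ) (r : ℝ) : ∏ j ∈ pnatsUpTo n, (j : ℝ) ^ r = (n ! : ℝ) ^ r := by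
  rw [finsetProd_rpow _ _ fun j _ => by positivity]
  simp [pnatsUpTo, ← prod_range_add_one_eq_factorial]

lemma pow_mul_sum_prod_le_prod_one_add {ι : Type*} {x : ι → ℝ} (hx : ∀ i, 0 ≤ x i) {t : ℝ}
    (ht : 0 ≤ t) {n : ℕ} {G : Finset (Finset ι)} (hG : ∀ v ∈ G, v.card = n) {U : Finset ι}
    (hGU : ∀ v ∈ G, v ⊆ U) :
    t ^ n * ∑ v ∈ G, ∏ i ∈ v, x i ≤ ∏ i ∈ U, (1 + t * x i) := by
  rw [prod_one_add, mul_sum]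
  calc ∑ v ∈ G, t ^ n * ∏ i ∈ v, x i = ∑ v ∈ G, ∏ i ∈ v, t * x i := by
        refine sum_congr rfl fun v hv => ?_
        rw [prod_mul_distrib, prod_const, hG v hv]
    _ ≤ ∑ v ∈ U.powerset, ∏ i ∈ v, t * x i :=
        sum_le_sum_of_subset_of_nonneg (fun v hv => mem_powerset.2 (hGU v hv))
          fun v _ _ => prod_nonneg fun i _ => mul_nonneg ht (hx i)

lemma prod_pnatsUpTo_one_add_le {ρ : ℝ} (hρ : 0 ≤ ρ) (n : ℕ) :
    ∏ j ∈ pnatsUpTo n, (1 + (n : ℝ) ^ ρ * (j : ℝ) ^ (-ρ)) ≤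
      2 ^ n * ((n : ℝ) ^ ρ) ^ n * (n ! : ℝ) ^ (-ρ) := by
  calc ∏ j ∈ pnatsUpTo n, (1 + (n : ℝ) ^ ρ * (j : ℝ) ^ (-ρ))
      ≤ ∏ j ∈ pnatsUpTo n, (2 * (n : ℝ) ^ ρ * (j : ℝ) ^ (-ρ)) := by
        refine prod_le_prod (fun j _ => by positivity) fun j hj => ?_
        have hj0 : (0 : ℝ) < j := by exact_mod_cast j.pos
        have hjn : (j : ℝ) ≤ n := by exact_mod_cast mem_pnatsUpTo.1 hj
        have : 1 ≤ (n : ℝ) ^ ρ * (j : ℝ) ^ (-ρ) := by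
          rw [rpow_neg hj0.le, ← div_eq_mul_inv, one_le_div (by positivity)]
          exact rpow_le_rpow hj0.le hjn hρ
        linarith
    _ = 2 ^ n * ((n : ℝ) ^ ρ) ^ n * (n ! : ℝ) ^ (-ρ) := by
        rw [prod_mul_distrib, prod_mul_distrib, prod_const, prod_const, card_pnatsUpTo,
          prod_pnatsUpTo_rpow]

lemma sum_prod_rpow_neg_le {ρ : ℝ} (hρ : 1 < ρ) {n : ℕ} {G : Finset (Finset ℕ+)}
    (hG : ∀ v ∈ G, v.card = n) :
    ∑ v ∈ G, ∏ j ∈ v, (j : ℝ) ^ (-ρ) ≤ (2 * exp (1 / (ρ - 1))) ^ n * (n ! : ℝ) ^ (-ρ) := by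
  set t : ℝ := (n : ℝ) ^ ρ
  set U := G.biUnion id ∪ pnatsUpTo n
  have htn : 0 < t ^ n := by
    rcases Nat.eq_zero_or_pos n with rfl | hn
    · simp
    · positivity
  have hsum := pow_mul_sum_prod_le_prod_one_add (x := fun j : ℕ+ => (j : ℝ) ^ (-ρ))
    (fun j => by positivity) (by positivity : 0 ≤ t) hG (U := U)
    fun v hv => (subset_biUnion_of_mem id hv).trans subset_union_left
  rw [← prod_sdiff (subset_union_right : pnatsUpTo n ⊆ U)] at hsum
  have htail : ∏ j ∈ U \ pnatsUpTo n, (1 + t * (j : ℝ) ^ (-ρ)) ≤ exp (n / (ρ - 1)) := by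
    refine (prod_one_add_le_exp_sum _ fun j => by positivity).trans (exp_le_exp.2 ?_)
    rw [← mul_sum]
    refine rpow_mul_sum_rpow_neg_le hρ n fun j hj => ?_
    rw [Finset.mem_sdiff, mem_pnatsUpTo] at hj
    omega
  have hhead := prod_pnatsUpTo_one_add_le (by linarith : 0 ≤ ρ) n
  refine le_of_mul_le_mul_left ?_ htn
  calc t ^ n * ∑ v ∈ G, ∏ j ∈ v, (j : ℝ) ^ (-ρ)
      ≤ exp (n / (ρ - 1)) * (2 ^ n * t ^ n * (n ! : ℝ) ^ (-ρ)) :=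
        hsum.trans (mul_le_mul htail hhead (prod_nonneg fun j _ => by positivity) (by positivity))
    _ = t ^ n * ((2 * exp (1 / (ρ - 1))) ^ n * (n ! : ℝ) ^ (-ρ)) := by
        rw [mul_pow, ← exp_nat_mul, mul_one_div]
        ring

lemma factorial_rpow_neg_mul_pow_le {ε r : ℝ} (hε : 0 < ε) (hr : 0 ≤ r) (n : ℕ) :
    (n ! : ℝ) ^ (-ε) * r ^ n ≤ exp (ε * (2 * r) ^ ε⁻¹) * (1 / 2) ^ n := by
  set y := (2 * r) ^ ε⁻¹
  have hy : 0 ≤ y := by positivity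
  have hfac : (0 : ℝ) < n ! := by exact_mod_cast n.factorial_pos
  have hexp : (y ^ n / n !) ^ ε ≤ exp (ε * y) := by
    rw [mul_comm, exp_mul]
    exact rpow_le_rpow (by positivity) (pow_div_factorial_le_exp y hy n) hε.le
  calc (n ! : ℝ) ^ (-ε) * r ^ n = (y ^ n / n !) ^ ε * (1 / 2) ^ n := by
        rw [div_rpow (by positivity) hfac.le, ← rpow_pow_comm hy, rpow_inv_rpow (by positivity)
          hε.ne', rpow_neg hfac.le, mul_pow]
        have h2 : (2 : ℝ) ^ n * (1 / 2) ^ n = 1 := by rw [← mul_pow]; norm_num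
        linear_combination (-(r ^ n / (n ! : ℝ) ^ ε)) * h2
    _ ≤ exp (ε * y) * (1 / 2) ^ n := by gcongr

lemma summable_factorial_rpow_neg_mul_pow {ε r : ℝ} (hε : 0 < ε) (hr : 0 ≤ r) :
    Summable fun n : ℕ => (n ! : ℝ) ^ (-ε) * r ^ n :=
  Summable.of_nonneg_of_le (fun n => by positivity) (factorial_rpow_neg_mul_pow_le hε hr)
    (summable_geometric_two.mul_left _)

lemma tsum_factorial_rpow_neg_mul_pow_le {ε r : ℝ} (hε : 0 < ε) (hr : 0 ≤ r) :
    ∑' n : ℕ, (n ! : ℝ) ^ (-ε) * r ^ n ≤ 2 * exp (ε * (2 * r) ^ ε⁻¹) := by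
  calc ∑' n : ℕ, (n ! : ℝ) ^ (-ε) * r ^ n ≤ ∑' n : ℕ, exp (ε * (2 * r) ^ ε⁻¹) * (1 / 2) ^ n :=
        (summable_factorial_rpow_neg_mul_pow hε hr).tsum_le_tsum
          (factorial_rpow_neg_mul_pow_le hε hr) (summable_geometric_two.mul_left _)
    _ = 2 * exp (ε * (2 * r) ^ ε⁻¹) := by rw [tsum_mul_left, tsum_geometric_two, mul_comm]

lemma sub_one_sub_log_div_two_le_log_factorial {n : ℕ} (hn : n ≠ 0) :
    (n : ℝ) - 1 - log n / 2 ≤ n * log n - log (n ! : ℝ) := by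
  obtain ⟨k, rfl⟩ := Nat.exists_eq_succ_of_ne_zero hn
  have hn0 : (0 : ℝ) < (k + 1 : ℕ) := by positivity
  have hlog := log_le_log (Stirling.stirlingSeq'_pos k)
    (Stirling.stirlingSeq'_antitone (Nat.zero_le k))
  simp only [Function.comp_apply, Nat.succ_eq_add_one, zero_add, Stirling.stirlingSeq_one,
    Stirling.log_stirlingSeq_formula] at hlog
  rw [log_div (exp_pos 1).ne' (by positivity), log_exp, log_sqrt zero_le_two,
    log_mul two_ne_zero hn0.ne', log_div hn0.ne' (exp_pos 1).ne', log_exp] at hlog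
  linarith

lemma tendsto_natFloor_sub_log_div_atTop :
    Tendsto (fun y : ℝ => ((⌊y⌋₊ : ℝ) - 1 - log ⌊y⌋₊ / 2) / y) atTop (𝓝 1) := by
  have hlog : Tendsto (fun y : ℝ => log ⌊y⌋₊ / ⌊y⌋₊) atTop (𝓝 0) :=
    isLittleO_log_id_atTop.tendsto_div_nhds_zero.comp
      (tendsto_natCast_atTop_atTop.comp tendsto_nat_floor_atTop)
  have hinv : Tendsto (fun y : ℝ => y⁻¹) atTop (𝓝 0) := tendsto_inv_atTop_zero
  have hlim := (tendsto_nat_floor_div_atTop.sub hinv).sub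
    ((hlog.mul tendsto_nat_floor_div_atTop).div_const 2)
  rw [sub_zero, zero_mul, zero_div, sub_zero] at hlim
  refine hlim.congr' ?_
  filter_upwards [eventually_ge_atTop 1] with y hy
  have hfl : (0 : ℝ) < ⌊y⌋₊ := by exact_mod_cast Nat.floor_pos.2 hy
  field_simp

/-- The summand `γ_v m ^ |v|` of `S(m)`. -/
noncomputable def podTerm (ρ σ C m : ℝ) (v : Finset ℕ+) : ℝ :=
  (Nat.factorial v.card : ℝ) ^ σ * m ^ v.card * ∏ j ∈ v, C * (j : ℝ) ^ (-ρ)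

lemma podTerm_eq (ρ σ C m : ℝ) (v : Finset ℕ+) :
    podTerm ρ σ C m v = (v.card ! : ℝ) ^ σ * (m * C) ^ v.card * ∏ j ∈ v, (j : ℝ) ^ (-ρ) := by
  rw [podTerm, prod_mul_distrib, prod_const, mul_pow]
  ring

lemma podTerm_nonneg (ρ σ : ℝ) {C m : ℝ} (hC : 0 ≤ C) (hm : 0 ≤ m) (v : Finset ℕ+) :
    0 ≤ podTerm ρ σ C m v := by
  rw [podTerm_eq]
  positivity

lemma podTerm_pnatsUpTo (ρ σ C m : ℝ) (n : ℕ) :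
    podTerm ρ σ C m (pnatsUpTo n) = (m * C) ^ n * (n ! : ℝ) ^ (σ - ρ) := by
  rw [podTerm_eq, card_pnatsUpTo, prod_pnatsUpTo_rpow, sub_eq_add_neg,
    rpow_add (by exact_mod_cast n.factorial_pos)]
  ring

lemma sum_podTerm_le {ρ σ C m : ℝ} (hρ : 1 < ρ) (hρσ : σ < ρ) (hC : 0 ≤ C) (hm : 0 ≤ m)
    (F : Finset (Finset ℕ+)) :
    ∑ v ∈ F, podTerm ρ σ C m v ≤
      ∑' n : ℕ, (n ! : ℝ) ^ (-(ρ - σ)) * (2 * exp (1 / (ρ - 1)) * m * C) ^ n := by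
  classical
  rw [← sum_fiberwise_of_maps_to (g := card) (t := F.image card)
    fun v hv => mem_image_of_mem _ hv]
  refine (sum_le_sum fun n _ => ?_).trans <|
    (summable_factorial_rpow_neg_mul_pow (by linarith) (by positivity)).sum_le_tsum _
      fun n _ => by positivity
  have hfac : (0 : ℝ) < n ! := by exact_mod_cast n.factorial_pos
  calc ∑ v ∈ F with v.card = n, podTerm ρ σ C m v
      = (n ! : ℝ) ^ σ * (m * C) ^ n * ∑ v ∈ F with v.card = n, ∏ j ∈ v, (j : ℝ) ^ (-ρ) := by
        rw [mul_sum]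
        refine sum_congr rfl fun v hv => ?_
        rw [podTerm_eq, (mem_filter.1 hv).2]
    _ ≤ (n ! : ℝ) ^ σ * (m * C) ^ n * ((2 * exp (1 / (ρ - 1))) ^ n * (n ! : ℝ) ^ (-ρ)) := by
        gcongr
        exact sum_prod_rpow_neg_le hρ fun v hv => (mem_filter.1 hv).2
    _ = (n ! : ℝ) ^ (-(ρ - σ)) * (2 * exp (1 / (ρ - 1)) * m * C) ^ n := by
        rw [show -(ρ - σ) = σ + -ρ by ring, rpow_add hfac]
        ring

lemma summable_podTerm {ρ σ C m : ℝ} (hρ : 1 < ρ) (hρσ : σ < ρ) (hC : 0 ≤ C) (hm : 0 ≤ m) :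
    Summable (podTerm ρ σ C m) :=
  summable_of_sum_le (podTerm_nonneg ρ σ hC hm) (sum_podTerm_le hρ hρσ hC hm)

lemma one_le_tsum_podTerm {ρ σ C m : ℝ} (hρ : 1 < ρ) (hρσ : σ < ρ) (hC : 0 ≤ C) (hm : 0 ≤ m) :
    1 ≤ ∑' v, podTerm ρ σ C m v := by
  simpa [podTerm] using
    (summable_podTerm hρ hρσ hC hm).le_tsum ∅ fun v _ => podTerm_nonneg ρ σ hC hm v

lemma log_tsum_podTerm_ge {ρ σ C m : ℝ} (hρ : 1 < ρ) (hρσ : σ < ρ) (hC : 0 < C) (hm : 0 < m)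
    (hmC : 1 ≤ m * C) :
    (ρ - σ) * ((⌊(m * C) ^ (1 / (ρ - σ))⌋₊ : ℝ) - 1 - log ⌊(m * C) ^ (1 / (ρ - σ))⌋₊ / 2) ≤
      log (∑' v, podTerm ρ σ C m v) := by
  have hε : 0 < ρ - σ := sub_pos.2 hρσ
  set y := (m * C) ^ (1 / (ρ - σ))
  set n := ⌊y⌋₊
  have hy : 1 ≤ y := one_le_rpow hmC (by positivity)
  have hn : n ≠ 0 := (Nat.floor_pos.2 hy).ne'
  have hn0 : (0 : ℝ) < n := by exact_mod_cast Nat.pos_of_ne_zero hn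
  have hny : (n : ℝ) ≤ y := Nat.floor_le (by linarith)
  have hfac : (0 : ℝ) < n ! := by exact_mod_cast n.factorial_pos
  have hterm : (m * C) ^ n * (n ! : ℝ) ^ (σ - ρ) ≤ ∑' v, podTerm ρ σ C m v :=
    podTerm_pnatsUpTo ρ σ C m n ▸ (summable_podTerm hρ hρσ hC.le hm.le).le_tsum _
      fun v _ => podTerm_nonneg ρ σ hC.le hm.le v
  have hlog_mC : log (m * C) = (ρ - σ) * log y := by
    rw [log_rpow (by positivity)]
    field_simp
  calc (ρ - σ) * ((n : ℝ) - 1 - log n / 2) ≤ (ρ - σ) * (n * log n - log (n ! : ℝ)) :=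
        mul_le_mul_of_nonneg_left (sub_one_sub_log_div_two_le_log_factorial hn) hε.le
    _ ≤ (ρ - σ) * (n * log y - log (n ! : ℝ)) := by gcongr
    _ = log ((m * C) ^ n * (n ! : ℝ) ^ (σ - ρ)) := by
        rw [log_mul (by positivity) (by positivity), log_pow, log_rpow hfac, hlog_mC]
        ring
    _ ≤ log (∑' v, podTerm ρ σ C m v) := log_le_log (by positivity) hterm

lemma rpow_neg_mul_log_tsum_podTerm_ge {ρ σ C m : ℝ} (hρ : 1 < ρ) (hρσ : σ < ρ) (hC : 0 < C)
    (hm : 0 < m) (hmC : 1 ≤ m * C) :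
    (ρ - σ) * C ^ (1 / (ρ - σ)) * (((⌊(m * C) ^ (1 / (ρ - σ))⌋₊ : ℝ) - 1 -
        log ⌊(m * C) ^ (1 / (ρ - σ))⌋₊ / 2) / (m * C) ^ (1 / (ρ - σ))) ≤
      m ^ (-(1 / (ρ - σ))) * log (∑' v, podTerm ρ σ C m v) := by
  calc _ = m ^ (-(1 / (ρ - σ))) * ((ρ - σ) * ((⌊(m * C) ^ (1 / (ρ - σ))⌋₊ : ℝ) - 1 -
        log ⌊(m * C) ^ (1 / (ρ - σ))⌋₊ / 2)) := by
        rw [mul_rpow hm.le hC.le, rpow_neg hm.le]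
        field_simp
    _ ≤ _ := by
        gcongr
        exact log_tsum_podTerm_ge hρ hρσ hC hm hmC

lemma rpow_neg_mul_log_tsum_podTerm_le {ρ σ C m : ℝ} (hρ : 1 < ρ) (hρσ : σ < ρ) (hC : 0 < C)
    (hm : 1 ≤ m) :
    m ^ (-(1 / (ρ - σ))) * log (∑' v, podTerm ρ σ C m v) ≤
      log 2 + (ρ - σ) * (4 * exp (1 / (ρ - 1)) * C) ^ (1 / (ρ - σ)) := by
  have hε : 0 < ρ - σ := sub_pos.2 hρσ
  have hm0 : 0 < m := by linarith
  set K := 4 * exp (1 / (ρ - 1)) * C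
  have hS := one_le_tsum_podTerm hρ hρσ hC.le hm0.le
  have hbound : ∑' v, podTerm ρ σ C m v ≤ 2 * exp ((ρ - σ) * (K * m) ^ (1 / (ρ - σ))) := by
    refine ((summable_podTerm hρ hρσ hC.le hm0.le).tsum_le_of_sum_le
      (sum_podTerm_le hρ hρσ hC.le hm0.le)).trans ?_
    refine (tsum_factorial_rpow_neg_mul_pow_le hε (by positivity)).trans_eq ?_
    rw [one_div (ρ - σ), show K * m = 2 * (2 * exp (1 / (ρ - 1)) * m * C) by ring]
  have hlog : log (∑' v, podTerm ρ σ C m v) ≤ log 2 + (ρ - σ) * K ^ (1 / (ρ - σ)) *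
      m ^ (1 / (ρ - σ)) := by
    calc _ ≤ log (2 * exp ((ρ - σ) * (K * m) ^ (1 / (ρ - σ)))) := log_le_log (by linarith) hbound
      _ = _ := by rw [log_mul two_ne_zero (exp_pos _).ne', log_exp, mul_rpow (by positivity)
            hm0.le, mul_assoc]
  have hmα : m ^ (-(1 / (ρ - σ))) * m ^ (1 / (ρ - σ)) = 1 := by
    rw [← rpow_add hm0, neg_add_cancel, rpow_zero]
  have hmα1 : m ^ (-(1 / (ρ - σ))) ≤ 1 :=
    rpow_le_one_of_one_le_of_nonpos hm (neg_nonpos.2 (by positivity))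
  calc _ ≤ m ^ (-(1 / (ρ - σ))) * (log 2 + (ρ - σ) * K ^ (1 / (ρ - σ)) * m ^ (1 / (ρ - σ))) := by
        gcongr
    _ = m ^ (-(1 / (ρ - σ))) * log 2 +
          (ρ - σ) * K ^ (1 / (ρ - σ)) * (m ^ (-(1 / (ρ - σ))) * m ^ (1 / (ρ - σ))) := by ring
    _ = m ^ (-(1 / (ρ - σ))) * log 2 + (ρ - σ) * K ^ (1 / (ρ - σ)) := by rw [hmα, mul_one]
    _ ≤ _ := by
        gcongr
        nlinarith [log_nonneg one_le_two]

theorem pod_power_weights_finite_and_liminf_general (ρ σ C : ℝ) (hρ : 1 < ρ)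
    (hρσ : σ < ρ) (hC : 0 < C) :
    (∀ m : ℝ, 0 < m →
      Summable (fun v : Finset ℕ+ =>
        (Nat.factorial v.card : ℝ) ^ σ * m ^ v.card * ∏ j ∈ v, C * (j : ℝ) ^ (-ρ))) ∧
    (ρ - σ) * C ^ (1 / (ρ - σ)) ≤
      liminf (fun m : ℝ =>
        m ^ (-(1 / (ρ - σ))) *
          Real.log (∑' v : Finset ℕ+,
            (Nat.factorial v.card : ℝ) ^ σ * m ^ v.card * ∏ j ∈ v, C * (j : ℝ) ^ (-ρ)))
        atTop := by
  refine ⟨fun m hm => summable_podTerm hρ hρσ hC.le hm.le, ?_⟩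
  have hα : 0 < 1 / (ρ - σ) := one_div_pos.2 (sub_pos.2 hρσ)
  have hlarge : ∀ᶠ m : ℝ in atTop, 1 ≤ m ∧ 1 ≤ m * C :=
    (eventually_ge_atTop 1).and ((tendsto_id.atTop_mul_const hC).eventually_ge_atTop 1)
  have hlim := ((tendsto_natFloor_sub_log_div_atTop.comp ((tendsto_rpow_atTop hα).comp
    (tendsto_id.atTop_mul_const hC))).const_mul ((ρ - σ) * C ^ (1 / (ρ - σ))))
  rw [mul_one] at hlim
  refine hlim.liminf_eq.symm.trans_le (liminf_le_liminf ?_ hlim.isBoundedUnder_ge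
    (isCoboundedUnder_ge_of_eventually_le atTop
      (x := log 2 + (ρ - σ) * (4 * exp (1 / (ρ - 1)) * C) ^ (1 / (ρ - σ))) ?_))
  · filter_upwards [hlarge] with m ⟨hm, hmC⟩
    exact rpow_neg_mul_log_tsum_podTerm_ge hρ hρσ hC (zero_lt_one.trans_le hm) hmC
  · filter_upwards [hlarge] with m ⟨hm, _⟩
    exact rpow_neg_mul_log_tsum_podTerm_le hρ hρσ hC hm

theorem pod_power_weights_finite_and_liminf (ρ σ C : ℝ) (hρ : 1 < ρ) (hσ : 0 ≤ σ)
    (hρσ : σ < ρ) (hC : 0 < C) :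
    (∀ m : ℝ, 0 < m →
      Summable (fun v : Finset ℕ+ =>
        (Nat.factorial v.card : ℝ) ^ σ * m ^ v.card * ∏ j ∈ v, C * (j : ℝ) ^ (-ρ))) ∧
    (ρ - σ) * C ^ (1 / (ρ - σ)) ≤
      liminf (fun m : ℝ =>
        m ^ (-(1 / (ρ - σ))) *
          Real.log (∑' v : Finset ℕ+,
            (Nat.factorial v.card : ℝ) ^ σ * m ^ v.card * ∏ j ∈ v, C * (j : ℝ) ^ (-ρ)))
        atTop :=
  pod_power_weights_finite_and_liminf_general ρ σ C hρ hρσ hC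
end

section
/- Let α ∈ ℕ and let (Υ_{j,k})_{j≥1, 1≤k≤α} be nonnegative reals with Σ_{j=1}^∞ Σ_{k=1}^α Υ_{j,k}^{1/k} < ∞. Then for every m > 0, the sum Σ_{v ⊆ ℕ finite} m^{|v|} Σ_{ν ∈ {1,...,α}^{v}} |ν|! ∏_{j∈v} Υ_{j,ν_j} is finite, where |ν| = Σ_{j∈v} ν_j. -/
/-!
Since `Υ j k ≤ b j ^ k` with `b j = ∑ₖ Υ j k ^ (1 / k)`, and since a pair `(v, ν)` is the same as
a multi-index `f : ℕ+ →₀ ℕ` with entries at most `α` (namely `indicator v ν`, of support `v`), the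
series is dominated by `∑_f |f|! ∏ⱼ c j ^ f j` with `c = max m 1 • b` summable.

Splitting `f` into its parts on and off a finite set `F` of indices costs a factor `2` in `c`,
because `(p + q)! ≤ 2 ^ (p + q) p! q!`. Only finitely many multi-indices live on `F`. Off `F`, the
bound `f j ≤ α` gives `|f|! ∏ c ^ f ≤ multinomial f · ∏ (α! c) ^ f`, so by the multinomial theorem
the multi-indices with `|f| = n` contribute at most `(∑_{j ∉ F} α! 2 c j) ^ n`: a geometric series,
convergent as soon as `F` is large enough.
-/

open Finset Finsupp
open scoped ENNReal Nat

theorem Nat.factorial_add_le_two_pow_mul (a b : ℕ) : (a + b)! ≤ 2 ^ (a + b) * (a ! * b !) := by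
  rw [← Nat.add_choose_mul_factorial_mul_factorial a b, mul_assoc]
  exact Nat.mul_le_mul_right _ (Nat.choose_le_two_pow _ _)

theorem Nat.factorial_le_factorial_pow {n α : ℕ} (h : n ≤ α) : n ! ≤ α ! ^ n := by
  rcases Nat.eq_zero_or_pos n with rfl | hn
  · simp
  · exact (Nat.factorial_le h).trans (Nat.le_self_pow hn.ne' _)

theorem le_sum_rpow_one_div_pow {u : ℕ → ℝ} (hu : ∀ k, 0 ≤ u k) {S : Finset ℕ} {k : ℕ}
    (hk : k ∈ S) (hk0 : k ≠ 0) : u k ≤ (∑ l ∈ S, u l ^ ((1 : ℝ) / l)) ^ k := by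
  calc u k = (u k ^ ((1 : ℝ) / k)) ^ k := by rw [one_div, Real.rpow_inv_natCast_pow (hu k) hk0]
    _ ≤ _ := by
      gcongr
      · exact Real.rpow_nonneg (hu k) _
      · exact single_le_sum (f := fun l => u l ^ ((1 : ℝ) / l))
          (fun l _ => Real.rpow_nonneg (hu l) _) hk

section MultiIndex

variable {ι : Type*}

noncomputable def spodWeight (c : ι → ℝ≥0∞) (f : ι →₀ ℕ) : ℝ≥0∞ :=
  (f.degree)! * f.prod fun i k => c i ^ k

def boundedMultiIndices (α : ℕ) (s : Set ι) : Set (ι →₀ ℕ) :=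
  {f | ↑f.support ⊆ s ∧ ∀ i, f i ≤ α}

theorem spodWeight_ne_top {c : ι → ℝ≥0∞} (hc : ∀ i, c i ≠ ⊤) (f : ι →₀ ℕ) :
    spodWeight c f ≠ ⊤ :=
  ENNReal.mul_ne_top (ENNReal.natCast_ne_top _)
    (ENNReal.prod_ne_top fun i _ => ENNReal.pow_ne_top (hc i))

theorem spodWeight_indicator (c : ι → ℝ≥0∞) (s : Finset ι) (ν : ∀ i ∈ s, ℕ) :
    spodWeight c (indicator s ν) = (∑ i ∈ s.attach, ν i i.2)! * ∏ i ∈ s.attach, c i ^ ν i i.2 := by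
  have hdeg : (indicator s ν).degree = (indicator s ν).sum fun _ k => k := rfl
  rw [spodWeight, hdeg, sum_indicator_index_eq_sum_attach _ (fun _ _ => rfl),
    prod_indicator_index_eq_prod_attach _ (fun _ _ => pow_zero _)]

theorem prod_const_mul_pow {M : Type*} [CommMonoid M] (a : M) (c : ι → M) (f : ι →₀ ℕ) :
    (f.prod fun i k => (a * c i) ^ k) = a ^ f.degree * f.prod fun i k => c i ^ k := by
  simp only [mul_pow, Finsupp.prod_mul]
  rw [Finsupp.prod, prod_pow_eq_pow_sum, degree_apply]

theorem spodWeight_add_le (c : ι → ℝ≥0∞) (f g : ι →₀ ℕ) :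
    spodWeight c (f + g) ≤ spodWeight (fun i => 2 * c i) f * spodWeight (fun i => 2 * c i) g := by
  have hfact : ((f.degree + g.degree)! : ℝ≥0∞) ≤
      2 ^ (f.degree + g.degree) * ((f.degree)! * (g.degree)!) := by
    exact_mod_cast Nat.factorial_add_le_two_pow_mul _ _
  rw [spodWeight, spodWeight, spodWeight, map_add,
    Finsupp.prod_add_index' (fun _ => pow_zero _) (fun _ _ _ => pow_add _ _ _),
    prod_const_mul_pow, prod_const_mul_pow]
  calc _ ≤ 2 ^ (f.degree + g.degree) * ((f.degree)! * (g.degree)!) *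
        ((f.prod fun i k => c i ^ k) * g.prod fun i k => c i ^ k) := by gcongr
    _ = _ := by ring

theorem spodWeight_le_multinomial_mul {α : ℕ} (c : ι → ℝ≥0∞) {f : ι →₀ ℕ} (hf : ∀ i, f i ≤ α) :
    spodWeight c f ≤ f.multinomial * f.prod fun i k => (α ! * c i) ^ k := by
  rw [spodWeight, degree_apply, ← Nat.multinomial_spec, ← Finsupp.multinomial_eq, Finsupp.prod,
    Finsupp.prod, Nat.cast_mul, Nat.cast_prod, mul_comm (∏ i ∈ f.support, _ : ℝ≥0∞), mul_assoc,
    ← prod_mul_distrib]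
  gcongr with i
  rw [mul_pow]
  gcongr
  exact_mod_cast Nat.factorial_le_factorial_pow (hf i)

theorem sum_multinomial_mul_prod_le_sum_pow {R : Type*} [CommSemiring R] [PartialOrder R]
    [CanonicallyOrderedAdd R] [IsOrderedAddMonoid R] (d : ι → R) {T : Finset ι} {n : ℕ}
    (u : Finset (ι →₀ ℕ)) (hu : ∀ f ∈ u, f.support ⊆ T ∧ f.degree = n) :
    ∑ f ∈ u, (f.multinomial : R) * (f.prod fun i k => d i ^ k) ≤ (∑ i ∈ T, d i) ^ n := by
  classical
  calc ∑ f ∈ u, (f.multinomial : R) * (f.prod fun i k => d i ^ k)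
      = ∑ f ∈ u, (Nat.multinomial T f : R) * ∏ i ∈ T, d i ^ f i := by
        refine sum_congr rfl fun f hf => ?_
        rw [multinomial_eq_of_support_subset (hu f hf).1,
          Finsupp.prod_of_support_subset _ (hu f hf).1 _ (fun _ _ => pow_zero _)]
    _ = ∑ k ∈ u.image (fun f : ι →₀ ℕ => (f : ι → ℕ)),
          (Nat.multinomial T k : R) * ∏ i ∈ T, d i ^ k i := by
        rw [sum_image fun f _ g _ h => Finsupp.ext (congrFun h)]
    _ ≤ ∑ k ∈ piAntidiag T n, (Nat.multinomial T k : R) * ∏ i ∈ T, d i ^ k i := by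
        refine sum_le_sum_of_subset fun k hk => ?_
        obtain ⟨f, hf, rfl⟩ := mem_image.1 hk
        refine mem_piAntidiag.2 ⟨?_, fun i hi => (hu f hf).1 (mem_support_iff.2 hi)⟩
        rw [← (hu f hf).2, degree_apply]
        exact (sum_subset (hu f hf).1 fun i _ hi => notMem_support_iff.1 hi).symm
    _ = (∑ i ∈ T, d i) ^ n := (sum_pow_eq_sum_piAntidiag T d n).symm

theorem tsum_spodWeight_le_tsum_geometric (α : ℕ) (c : ι → ℝ≥0∞) (s : Set ι) :
    ∑' f : boundedMultiIndices α s, spodWeight c f ≤ ∑' n : ℕ, (∑' i : s, α ! * c i) ^ n := by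
  classical
  set σ := ∑' i : s, α ! * c i
  rw [ENNReal.tsum_eq_iSup_sum]
  refine iSup_le fun t => ?_
  set u := t.map (Function.Embedding.subtype _)
  have hu : ∀ f ∈ u, f ∈ boundedMultiIndices α s := by
    intro f hf
    obtain ⟨f, -, rfl⟩ := mem_map.1 hf
    exact f.2
  set T := u.biUnion Finsupp.support
  have hTσ : ∑ i ∈ T, α ! * c i ≤ σ := by
    have hTs : (T : Set ι) ⊆ s := by
      intro i hi
      obtain ⟨f, hf, hi⟩ := mem_biUnion.1 hi
      exact (hu f hf).1 hi
    rw [← Finset.tsum_subtype']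
    exact ENNReal.tsum_mono_subtype (fun i => α ! * c i) hTs
  calc ∑ f ∈ t, spodWeight c f = ∑ f ∈ u, spodWeight c f := by rw [sum_map]; rfl
    _ = ∑ n ∈ u.image degree, ∑ f ∈ u with f.degree = n, spodWeight c f :=
        (sum_fiberwise_of_maps_to (fun f hf => mem_image_of_mem _ hf) _).symm
    _ ≤ ∑ n ∈ u.image degree, σ ^ n := by
        refine sum_le_sum fun n _ => ?_
        calc ∑ f ∈ u with f.degree = n, spodWeight c f
            ≤ ∑ f ∈ u with f.degree = n,
                (f.multinomial : ℝ≥0∞) * f.prod fun i k => (α ! * c i) ^ k :=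
              sum_le_sum fun f hf => spodWeight_le_multinomial_mul c (hu f (mem_filter.1 hf).1).2
          _ ≤ (∑ i ∈ T, α ! * c i) ^ n := by
              refine sum_multinomial_mul_prod_le_sum_pow _ _ fun f hf => ?_
              obtain ⟨hfu, rfl⟩ := mem_filter.1 hf
              exact ⟨subset_biUnion_of_mem _ hfu, rfl⟩
          _ ≤ σ ^ n := by gcongr
    _ ≤ ∑' n, σ ^ n := ENNReal.sum_le_tsum _

theorem tsum_spodWeight_ne_top_of_finset (α : ℕ) {c : ι → ℝ≥0∞} (hc : ∀ i, c i ≠ ⊤)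
    (F : Finset ι) : ∑' f : boundedMultiIndices α (F : Set ι), spodWeight c f ≠ ⊤ := by
  classical
  have hsub : boundedMultiIndices α (F : Set ι) ⊆ ↑(F.finsupp fun _ => range (α + 1)) :=
    fun f hf => mem_finsupp_iff.2
      ⟨coe_subset.1 hf.1, fun i _ => mem_range.2 (Nat.lt_succ_of_le (hf.2 i))⟩
  refine ne_top_of_le_ne_top ?_ (ENNReal.tsum_mono_subtype _ hsub)
  rw [Finset.tsum_subtype']
  exact ENNReal.sum_ne_top.2 fun f _ => spodWeight_ne_top hc f

theorem filter_mem_boundedMultiIndices {α : ℕ} {f : ι →₀ ℕ} (hf : ∀ i, f i ≤ α)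
    (p : ι → Prop) [DecidablePred p] : f.filter p ∈ boundedMultiIndices α {i | p i} := by
  refine ⟨fun i hi => ?_, fun i => ?_⟩
  · rw [mem_coe, support_filter, mem_filter] at hi
    exact hi.2
  · rw [filter_apply]
    split_ifs
    exacts [hf i, Nat.zero_le α]

theorem tsum_spodWeight_le_mul (α : ℕ) (c : ι → ℝ≥0∞) (s : Set ι) [DecidablePred (· ∈ s)] :
    ∑' f : boundedMultiIndices α (Set.univ : Set ι), spodWeight c f ≤
      (∑' f : boundedMultiIndices α s, spodWeight (fun i => 2 * c i) f) *
        ∑' f : boundedMultiIndices α sᶜ, spodWeight (fun i => 2 * c i) f := by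
  set w := spodWeight fun i => 2 * c i
  let split (f : boundedMultiIndices α (Set.univ : Set ι)) :
      boundedMultiIndices α s × boundedMultiIndices α sᶜ :=
    (⟨f.1.filter (· ∈ s), filter_mem_boundedMultiIndices f.2.2 (· ∈ s)⟩,
      ⟨f.1.filter (· ∉ s), filter_mem_boundedMultiIndices f.2.2 (· ∉ s)⟩)
  have hsplit : Function.Injective split := fun f g h => by
    simp only [split, Prod.ext_iff, Subtype.ext_iff] at h
    rw [Subtype.ext_iff, ← filter_add_filter_not f.1 (· ∈ s), ← filter_add_filter_not g.1 (· ∈ s),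
      h.1, h.2]
  calc ∑' f : boundedMultiIndices α (Set.univ : Set ι), spodWeight c f
      ≤ ∑' f, w (split f).1 * w (split f).2 := ENNReal.tsum_le_tsum fun f => by
        have := spodWeight_add_le c (f.1.filter (· ∈ s)) (f.1.filter (· ∉ s))
        rwa [filter_add_filter_not] at this
    _ ≤ ∑' p : boundedMultiIndices α s × boundedMultiIndices α sᶜ, w p.1 * w p.2 :=
        ENNReal.tsum_comp_le_tsum_of_injective hsplit (fun p => w p.1 * w p.2)
    _ = _ := by rw [ENNReal.tsum_prod']; simp only [ENNReal.tsum_mul_left, ENNReal.tsum_mul_right]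

theorem tsum_spodWeight_ne_top (α : ℕ) {c : ι → ℝ≥0∞} (hc : ∑' i, c i ≠ ⊤) :
    ∑' f : boundedMultiIndices α (Set.univ : Set ι), spodWeight c f ≠ ⊤ := by
  classical
  have hd : ∑' i, α ! * (2 * c i) ≠ ⊤ := by
    rw [ENNReal.tsum_mul_left, ENNReal.tsum_mul_left]
    exact ENNReal.mul_ne_top (ENNReal.natCast_ne_top _) (ENNReal.mul_ne_top ENNReal.ofNat_ne_top hc)
  obtain ⟨F, hF⟩ : ∃ F : Finset ι, ∑' i : {i // i ∉ F}, α ! * (2 * c i) < 1 :=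
    ((ENNReal.tendsto_tsum_compl_atTop_zero hd).eventually_lt_const zero_lt_one).exists
  refine ne_top_of_le_ne_top (ENNReal.mul_ne_top ?_ ?_) (tsum_spodWeight_le_mul α c F)
  · exact tsum_spodWeight_ne_top_of_finset α
      (fun i => ENNReal.mul_ne_top ENNReal.ofNat_ne_top (ENNReal.ne_top_of_tsum_ne_top hc i)) F
  · refine ne_top_of_le_ne_top ?_ (tsum_spodWeight_le_tsum_geometric α _ _)
    rw [ENNReal.tsum_geometric]
    exact ENNReal.inv_ne_top.2 (tsub_pos_of_lt hF).ne'

theorem mem_finsupp_Icc_one_iff {α : ℕ} {v : Finset ι} {f : ι →₀ ℕ} :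
    f ∈ v.finsupp (fun _ => Icc 1 α) ↔ f.support = v ∧ ∀ i, f i ≤ α := by
  rw [mem_finsupp_iff]
  constructor
  · rintro ⟨hsupp, hf⟩
    refine ⟨hsupp.antisymm fun i hi => mem_support_iff.2 ?_, fun i => ?_⟩
    · exact Nat.one_le_iff_ne_zero.1 (mem_Icc.1 (hf i hi)).1
    · by_cases hi : i ∈ v
      · exact (mem_Icc.1 (hf i hi)).2
      · rw [notMem_support_iff.1 fun h => hi (hsupp h)]
        exact Nat.zero_le α
  · rintro ⟨rfl, hf⟩
    exact ⟨subset_rfl, fun i hi =>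
      mem_Icc.2 ⟨Nat.one_le_iff_ne_zero.2 (mem_support_iff.1 hi), hf i⟩⟩

theorem tsum_sum_pi_eq_tsum_boundedMultiIndices [DecidableEq ι] (α : ℕ)
    (g : (ι →₀ ℕ) → ℝ≥0∞) :
    ∑' v : Finset ι, ∑ ν ∈ v.pi (fun _ => Icc 1 α), g (indicator v ν) =
      ∑' f : boundedMultiIndices α (Set.univ : Set ι), g f := by
  classical
  have hpi (v : Finset ι) : ∑ ν ∈ v.pi (fun _ => Icc 1 α), g (indicator v ν) =
      ∑' f, if f.support = v ∧ ∀ i, f i ≤ α then g f else 0 := by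
    have hmap : (v.pi fun _ => Icc 1 α).map ⟨indicator v, indicator_injective v⟩ =
        v.finsupp fun _ => Icc 1 α := by
      -- `Finset.finsupp` uses classical decidable equality, hence `congr!`
      rw [Finset.finsupp]
      congr!
    refine (sum_map _ ⟨indicator v, indicator_injective v⟩ g).symm.trans ?_
    rw [hmap, sum_eq_tsum_indicator]
    simp only [Set.indicator_apply, mem_coe, mem_finsupp_Icc_one_iff]
  rw [tsum_congr hpi, ENNReal.tsum_comm, _root_.tsum_subtype]
  refine tsum_congr fun f => ?_
  simp only [ite_and, eq_comm (a := f.support), tsum_ite_eq, Set.indicator_apply]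
  simp [boundedMultiIndices]

theorem ofReal_mul_sum_le_sum_spodWeight [DecidableEq ι] {α : ℕ} {Υ : ι → ℕ → ℝ}
    (hΥ : ∀ j k, 0 ≤ Υ j k) {m : ℝ} (hm : 0 ≤ m) {b : ι → ℝ≥0∞}
    (hb : ∀ j, ∀ k ∈ Icc 1 α, ENNReal.ofReal (Υ j k) ≤ b j ^ k) (v : Finset ι) :
    ENNReal.ofReal (m ^ v.card * ∑ ν ∈ v.pi (fun _ => Icc 1 α),
        ((∑ j ∈ v.attach, ν j.1 j.2)! : ℝ) * ∏ j ∈ v.attach, Υ j.1 (ν j.1 j.2)) ≤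
      ∑ ν ∈ v.pi (fun _ => Icc 1 α),
        spodWeight (fun j => max (ENNReal.ofReal m) 1 * b j) (indicator v ν) := by
  rw [ENNReal.ofReal_mul (pow_nonneg hm _), ENNReal.ofReal_pow hm,
    ENNReal.ofReal_sum_of_nonneg fun ν _ =>
      mul_nonneg (Nat.cast_nonneg _) (prod_nonneg fun j _ => hΥ _ _), Finset.mul_sum]
  refine sum_le_sum fun ν hν => ?_
  rw [ENNReal.ofReal_mul (Nat.cast_nonneg _), ENNReal.ofReal_natCast,
    ENNReal.ofReal_prod_of_nonneg fun j _ => hΥ _ _, spodWeight_indicator, mul_left_comm,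
    ← card_attach, ← prod_const, ← prod_mul_distrib]
  gcongr with j
  have hk := mem_pi.1 hν j.1 j.2
  rw [mul_pow]
  gcongr
  · exact (le_max_left _ _).trans
      (le_self_pow₀ (le_max_right _ _) (Nat.one_le_iff_ne_zero.1 (mem_Icc.1 hk).1))
  · exact hb _ _ hk

end MultiIndex

theorem spod_summable_general (α : ℕ) (Υ : ℕ+ → ℕ → ℝ)
    (hΥ : ∀ j k, 0 ≤ Υ j k)
    (hsum : Summable (fun j : ℕ+ => ∑ k ∈ Finset.Icc 1 α, Υ j k ^ ((1 : ℝ) / (k : ℝ))))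
    (m : ℝ) (hm : 0 < m) :
    Summable (fun v : Finset ℕ+ =>
      m ^ v.card *
        ∑ ν ∈ v.pi (fun _ => Finset.Icc 1 α),
          (Nat.factorial (∑ j ∈ v.attach, ν j.1 j.2) : ℝ) * ∏ j ∈ v.attach, Υ j.1 (ν j.1 j.2)) := by
  set B : ℕ+ → ℝ := fun j => ∑ k ∈ Icc 1 α, Υ j k ^ ((1 : ℝ) / k)
  have hB (j : ℕ+) : 0 ≤ B j := sum_nonneg fun k _ => Real.rpow_nonneg (hΥ j k) _
  have hb (j : ℕ+) : ∀ k ∈ Icc 1 α, ENNReal.ofReal (Υ j k) ≤ ENNReal.ofReal (B j) ^ k := by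
    intro k hk
    rw [← ENNReal.ofReal_pow (hB j)]
    exact ENNReal.ofReal_le_ofReal
      (le_sum_rpow_one_div_pow (hΥ j) hk (Nat.one_le_iff_ne_zero.1 (mem_Icc.1 hk).1))
  have hc : ∑' j, max (ENNReal.ofReal m) 1 * ENNReal.ofReal (B j) ≠ ⊤ := by
    rw [ENNReal.tsum_mul_left, ← ENNReal.ofReal_tsum_of_nonneg hB hsum]
    exact ENNReal.mul_ne_top (max_ne_top ENNReal.ofReal_ne_top ENNReal.one_ne_top)
      ENNReal.ofReal_ne_top
  have hfin := ne_top_of_le_ne_top (tsum_spodWeight_ne_top α hc)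
    ((ENNReal.tsum_le_tsum (ofReal_mul_sum_le_sum_spodWeight hΥ hm.le hb)).trans_eq
      (tsum_sum_pi_eq_tsum_boundedMultiIndices α _))
  refine (ENNReal.summable_toReal hfin).congr fun v => ENNReal.toReal_ofReal ?_
  exact mul_nonneg (pow_nonneg hm.le _)
    (sum_nonneg fun ν _ => mul_nonneg (Nat.cast_nonneg _) (prod_nonneg fun j _ => hΥ _ _))

theorem spod_summable (α : ℕ) (hα : 1 ≤ α) (Υ : ℕ+ → ℕ → ℝ)
    (hΥ : ∀ j k, 0 ≤ Υ j k)
    (hsum : Summable (fun j : ℕ+ => ∑ k ∈ Finset.Icc 1 α, Υ j k ^ ((1 : ℝ) / (k : ℝ))))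
    (m : ℝ) (hm : 0 < m) :
    Summable (fun v : Finset ℕ+ =>
      m ^ v.card *
        ∑ ν ∈ v.pi (fun _ => Finset.Icc 1 α),
          (Nat.factorial (∑ j ∈ v.attach, ν j.1 j.2) : ℝ) * ∏ j ∈ v.attach, Υ j.1 (ν j.1 j.2)) :=
  spod_summable_general α Υ hΥ hsum m hm
end
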